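/- arXiv:1508.00667 — 13 statements merged into one kernel-verified Lean document; each statement's English description precedes it below -/
import Mathlib

section
/- Every topologically independent subset of an abelian topological group is independent. -/
open Filter Topology

section Defs
variable {G : Type*} [AddCommGroup G] [TopologicalSpace G]

/-- A set `A` in a topological abelian group is *topologically independent* if `0 ∉ A` and
for every neighbourhood `W` of `0` there is a neighbourhood `U` of `0` such that whenever a
finite integer combination of elements of `A` lies in `U`, each of its terms lies in `W`. -/
def TopIndep (A : Set G) : Prop :=
  (0 : G) ∉ A ∧ ∀ W ∈ 𝓝 (0 : G), ∃ U ∈ 𝓝 (0 : G),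
    ∀ F : Finset G, ↑F ⊆ A → ∀ z : G → ℤ,
      (∑ a ∈ F, z a • a) ∈ U → ∀ a ∈ F, z a • a ∈ W

/-- Algebraic independence of a subset of an abelian group. -/
def Indep (A : Set G) : Prop :=
  (0 : G) ∉ A ∧ ∀ F : Finset G, ↑F ⊆ A → ∀ z : G → ℤ,
    (∑ a ∈ F, z a • a) = 0 → ∀ a ∈ F, z a • a = 0

/-- `A` is absolutely Cauchy summable: every neighbourhood of `0` contains the subgroup
generated by `A \ F` for some finite `F ⊆ A`. -/
def AbsCauchySummable (A : Set G) : Prop :=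
  ∀ U ∈ 𝓝 (0 : G), ∃ F : Finset G, ↑F ⊆ A ∧
    (AddSubgroup.closure (A \ ↑F) : Set G) ⊆ U

/-- `A` is absolutely summable: for every integer family the net of finite partial sums
converges. -/
def AbsSummable (A : Set G) : Prop :=
  ∀ z : A → ℤ, ∃ g : G, HasSum (fun a : A => z a • (a : G)) g

end Defs

/-- The direct sum `⊕_i H i`, realized as the subgroup of the product `Π i, H i`
consisting of finitely supported elements; it carries the topology inherited from the
Tychonoff product topology. -/
def FinSupp (ι : Type*) (H : ι → Type*) [∀ i, AddCommGroup (H i)] :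
    AddSubgroup (Π i, H i) where
  carrier := {f | {i | f i ≠ 0}.Finite}
  zero_mem' := by simp
  add_mem' := by
    intro f g hf hg
    refine (hf.union hg).subset fun i hi => ?_
    by_contra h
    simp only [Set.mem_union, Set.mem_setOf_eq, not_or, not_not] at h
    exact hi (by simp [h.1, h.2])
  neg_mem' := by
    intro f hf
    refine hf.subset fun i hi => ?_
    simp only [Set.mem_setOf_eq] at hi ⊢
    simpa using hi

/-- The Kalton map `κ_A : S_A = ⊕_{a ∈ A} ⟨a⟩ → G`, sending a finitely supported family to
the sum of its components. -/
noncomputable def kalton {G : Type*} [AddCommGroup G] (A : Set G)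
    (f : FinSupp A (fun a => AddSubgroup.zmultiples (a : G))) : G :=
  ∑ᶠ a : A, ((f.1 a : G))

section Sing
variable {ι : Type*} [DecidableEq ι] {H : ι → Type*} [∀ i, AddCommGroup (H i)]

/-- The element of the direct sum supported at `i` with value `x`. -/
def sing (i : ι) (x : H i) : FinSupp ι H :=
  ⟨Pi.single i x, (Set.finite_singleton i).subset (by
    intro b hb
    simp only [Set.mem_setOf_eq] at hb
    by_contra hba
    exact hb (Pi.single_eq_of_ne (by simpa using hba) x))⟩

end Sing

namespace TopIndep

variable {G : Type*} [AddCommGroup G] [TopologicalSpace G] {A : Set G}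

theorem smul_specializes_zero (hA : TopIndep A) {F : Finset G} (hF : ↑F ⊆ A) {z : G → ℤ}
    (hsum : (∑ a ∈ F, z a • a) = 0) {a : G} (ha : a ∈ F) : (z a • a) ⤳ 0 := by
  rw [specializes_iff_pure, Filter.le_def]
  intro W hW
  obtain ⟨U, hU, hP⟩ := hA.2 W hW
  exact hP F hF z (hsum ▸ mem_of_mem_nhds hU) a ha

theorem indep [T1Space G] (hA : TopIndep A) : Indep A :=
  ⟨hA.1, fun _ hF _ hsum _ ha => (hA.smul_specializes_zero hF hsum ha).eq⟩

end TopIndep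

theorem stmt0_general {G : Type*} [AddCommGroup G] [TopologicalSpace G]
    [T2Space G] (A : Set G) (hA : TopIndep A) : Indep A :=
  hA.indep

theorem stmt0 {G : Type*} [AddCommGroup G] [TopologicalSpace G] [IsTopologicalAddGroup G]
    [T2Space G] (A : Set G) (hA : TopIndep A) : Indep A :=
  stmt0_general A hA
end

section
/- For every n ∈ ℕ, each topologically independent subset of ℝⁿ has cardinality at most n. -/
/-!
If `A` contained `n + 1` points `aᵢ`, topological independence (with `W` the intersection of the
balls of radius `‖aᵢ‖`, using `‖k • a‖ ≥ ‖a‖` for `k ≠ 0`) would give a neighbourhood of `0`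
containing no nonzero integer combination of the `aᵢ`. The `aᵢ` would then be `ℤ`-independent
with discrete `ℤ`-span, i.e. a lattice of rank `n + 1` in their real span, whose dimension is
at most `n`.
-/

open Filter Topology

open Module Submodule

lemma Submodule.discreteTopology_of_inter_nhds_subset_zero {G : Type*} [AddCommGroup G]
    [TopologicalSpace G] [IsTopologicalAddGroup G] (L : Submodule ℤ G) {U : Set G}
    (hU : U ∈ 𝓝 0) (h : ∀ x ∈ L, x ∈ U → x = 0) : DiscreteTopology L := by
  rw [discreteTopology_iff_isOpen_singleton_zero, isOpen_iff_mem_nhds]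
  rintro x rfl
  rw [nhds_subtype, Filter.mem_comap]
  exact ⟨U, hU, fun y hy => Subtype.ext (h y y.2 hy)⟩

section NormedSpace
variable {E : Type*} [NormedAddCommGroup E] [NormedSpace ℝ E]

lemma norm_le_norm_zsmul {k : ℤ} (hk : k ≠ 0) (a : E) : ‖a‖ ≤ ‖k • a‖ := by
  rw [← Int.cast_smul_eq_zsmul ℝ, norm_smul, Real.norm_eq_abs, ← Int.cast_abs]
  exact le_mul_of_one_le_left (norm_nonneg a) (by exact_mod_cast Int.one_le_abs hk)

lemma TopIndep.exists_nhds_forall_eq_zero_of_sum_mem {A : Set E} (hA : TopIndep A)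
    {F : Finset E} (hFA : ↑F ⊆ A) :
    ∃ U ∈ 𝓝 (0 : E), ∀ z : E → ℤ, ∑ a ∈ F, z a • a ∈ U → ∀ a ∈ F, z a = 0 := by
  obtain ⟨h0, hA⟩ := hA
  have hW : (⋂ a ∈ F, Metric.ball (0 : E) ‖a‖) ∈ 𝓝 0 :=
    (Filter.biInter_finset_mem F).mpr fun a ha =>
      Metric.ball_mem_nhds 0 (norm_pos_iff.mpr fun h => h0 (h ▸ hFA ha))
  obtain ⟨U, hU, hUW⟩ := hA _ hW
  refine ⟨U, hU, fun z hz a ha => ?_⟩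
  have hsmall := Set.mem_iInter₂.mp (hUW F hFA z hz a ha) a ha
  rw [mem_ball_zero_iff] at hsmall
  by_contra hza
  exact (norm_le_norm_zsmul hza a).not_gt hsmall

variable [FiniteDimensional ℝ E]

lemma not_linearIndependent_int_of_discreteTopology_span {ι : Type*} [Fintype ι] {v : ι → E}
    (hcard : finrank ℝ E < Fintype.card ι) (hdisc : DiscreteTopology (span ℤ (Set.range v))) :
    ¬ LinearIndependent ℤ v := by
  intro hv
  have hrank := Real.finrank_eq_int_finrank_of_discrete hdisc
  have hle : Set.finrank ℝ (Set.range v) ≤ finrank ℝ E := Submodule.finrank_le _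
  rw [hrank, Set.finrank, finrank_span_eq_card hv] at hle
  omega

lemma exists_ne_zero_sum_zsmul_mem_of_finrank_lt {ι : Type*} [Fintype ι] (v : ι → E)
    (hcard : finrank ℝ E < Fintype.card ι) {U : Set E} (hU : U ∈ 𝓝 0) :
    ∃ z : ι → ℤ, z ≠ 0 ∧ ∑ i, z i • v i ∈ U := by
  by_contra! h
  have hind : LinearIndependent ℤ v := by
    rw [Fintype.linearIndependent_iff]
    intro z hz
    by_contra! hz0
    exact h z (Function.ne_iff.mpr hz0) (hz ▸ mem_of_mem_nhds hU)
  refine not_linearIndependent_int_of_discreteTopology_span hcard ?_ hind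
  refine (span ℤ (Set.range v)).discreteTopology_of_inter_nhds_subset_zero hU fun x hx hxU => ?_
  obtain ⟨z, rfl⟩ := (mem_span_range_iff_exists_fun ℤ).mp hx
  by_cases hz : z = 0
  · simp [hz]
  · exact absurd hxU (h z hz)

theorem TopIndep.card_le_finrank {A : Set E} (hA : TopIndep A) :
    Cardinal.mk A ≤ finrank ℝ E := by
  classical
  refine Cardinal.mk_le_iff_forall_finset_subset_card_le.mpr fun F hFA => ?_
  by_contra! hF
  obtain ⟨U, hU, hUF⟩ := hA.exists_nhds_forall_eq_zero_of_sum_mem hFA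
  obtain ⟨z, hz0, hzU⟩ := exists_ne_zero_sum_zsmul_mem_of_finrank_lt ((↑) : F → E)
    (by rwa [Fintype.card_coe]) hU
  let z' : E → ℤ := fun a => if h : a ∈ F then z ⟨a, h⟩ else 0
  have hsum : ∑ a ∈ F, z' a • a = ∑ i : F, z i • (i : E) := by
    rw [← Finset.sum_coe_sort F]
    exact Finset.sum_congr rfl fun i _ => by simp [z']
  refine hz0 (funext fun i => ?_)
  simpa [z'] using hUF z' (hsum ▸ hzU) i i.2

end NormedSpace

theorem stmt1 (n : ℕ) (A : Set (Fin n → ℝ)) (hA : TopIndep A) :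
    Cardinal.mk A ≤ n := by
  simpa using hA.card_le_finrank
end

section
/- Every topologically independent subset of ℝ has at most one element, although ℝ contains an (algebraically) independent subset of cardinality continuum. -/
open Filter Topology

/-!
Two distinct points `a, b` of a topologically independent `A ⊆ ℝ` would generate a cyclic
subgroup: taking `W = (-min |a| |b|, min |a| |b|)`, no nonzero multiple of `a` or of `b` lies in
`W`, so the neighbourhood `U` attached to `W` meets `⟨a, b⟩` only in `0`. But then `a` and `b`
are commensurable, and the resulting relation `m • a + n • b = 0` with `m • a ≠ 0` contradicts
topological independence, since `0` lies in every `U` while `m • a` can be kept out of `W`.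
A Hamel basis of `ℝ` over `ℚ` is algebraically independent and has cardinality `𝔠`.
-/

section Pair
variable {G : Type*} [AddCommGroup G] {a b : G}

lemma Finset.sum_pair_ite_zsmul [DecidableEq G] (hab : a ≠ b) (m n : ℤ) :
    ∑ t ∈ ({a, b} : Finset G), (if t = a then m else n) • t = m • a + n • b := by
  rw [Finset.sum_pair hab, if_pos rfl, if_neg hab.symm]

variable [TopologicalSpace G] {A : Set G}

lemma TopIndep.pair (hA : TopIndep A) (ha : a ∈ A) (hb : b ∈ A) (hab : a ≠ b)
    {W : Set G} (hW : W ∈ 𝓝 0) :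
    ∃ U ∈ 𝓝 (0 : G), ∀ m n : ℤ, m • a + n • b ∈ U → m • a ∈ W ∧ n • b ∈ W := by
  classical
  obtain ⟨U, hU, hUW⟩ := hA.2 W hW
  refine ⟨U, hU, fun m n hmn => ?_⟩
  have hF : (({a, b} : Finset G) : Set G) ⊆ A := by simp [Set.insert_subset_iff, ha, hb]
  have key := hUW {a, b} hF (fun t => if t = a then m else n)
    (by rwa [Finset.sum_pair_ite_zsmul hab])
  simpa [hab.symm] using And.intro (key a (by simp)) (key b (by simp))

lemma TopIndep.zsmul_eq_zero_of_zsmul_add_zsmul_eq_zero [T1Space G] (hA : TopIndep A)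
    (ha : a ∈ A) (hb : b ∈ A) (hab : a ≠ b) {m n : ℤ} (h : m • a + n • b = 0) : m • a = 0 := by
  by_contra hma
  obtain ⟨U, hU, hUW⟩ := hA.pair ha hb hab (isOpen_compl_singleton.mem_nhds (Ne.symm hma))
  exact (hUW m n (h ▸ mem_of_mem_nhds hU)).1 rfl

end Pair

lemma exists_zsmul_add_zsmul_eq_zero_of_mem_zmultiples {G : Type*} [AddCommGroup G]
    [IsAddTorsionFree G] {a b c : G} (ha : a ∈ AddSubgroup.zmultiples c)
    (hb : b ∈ AddSubgroup.zmultiples c) (ha0 : a ≠ 0) (hb0 : b ≠ 0) :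
    ∃ m n : ℤ, m • a + n • b = 0 ∧ m • a ≠ 0 := by
  obtain ⟨p, rfl⟩ := AddSubgroup.mem_zmultiples_iff.1 ha
  obtain ⟨q, rfl⟩ := AddSubgroup.mem_zmultiples_iff.1 hb
  refine ⟨q, -p, ?_, smul_ne_zero (fun hq => hb0 (by rw [hq, zero_zsmul])) ha0⟩
  rw [smul_smul, smul_smul, ← add_smul, mul_comm, neg_mul, add_neg_cancel, zero_zsmul]

lemma Real.zsmul_eq_zero_of_mem_ball {a : ℝ} {m : ℤ} (h : m • a ∈ Metric.ball 0 |a|) :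
    m • a = 0 := by
  rcases eq_or_ne m 0 with rfl | hm
  · exact zero_zsmul a
  rw [mem_ball_zero_iff, Real.norm_eq_abs, zsmul_eq_mul, abs_mul] at h
  have hm1 : (1 : ℝ) ≤ |(m : ℝ)| := by exact_mod_cast Int.one_le_abs hm
  nlinarith [abs_nonneg a]

lemma Real.subsingleton_of_topIndep {A : Set ℝ} (hA : TopIndep A) : A.Subsingleton := by
  intro a ha b hb
  by_contra hab
  have ha0 : a ≠ 0 := ne_of_mem_of_not_mem ha hA.1
  have hb0 : b ≠ 0 := ne_of_mem_of_not_mem hb hA.1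
  obtain ⟨U, hU, hUW⟩ := hA.pair ha hb hab
    (Metric.ball_mem_nhds 0 (lt_min (abs_pos.2 ha0) (abs_pos.2 hb0)))
  obtain ⟨ε, hε, hεU⟩ := Metric.mem_nhds_iff.1 hU
  have hisolated : Disjoint
      ((AddSubgroup.zmultiples a ⊔ AddSubgroup.zmultiples b : AddSubgroup ℝ) : Set ℝ)
      (Set.Ioo 0 ε) := by
    refine Set.disjoint_left.2 fun s hs hsε => ?_
    obtain ⟨_, ⟨m, rfl⟩, _, ⟨n, rfl⟩, rfl⟩ := AddSubgroup.mem_sup.1 hs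
    have hsU : m • a + n • b ∈ U := hεU (by
      rw [mem_ball_zero_iff, Real.norm_eq_abs, abs_lt]
      exact ⟨by linarith [hsε.1], hsε.2⟩)
    obtain ⟨hma, hnb⟩ := hUW m n hsU
    have hma0 := Real.zsmul_eq_zero_of_mem_ball (Metric.ball_subset_ball (min_le_left _ _) hma)
    have hnb0 := Real.zsmul_eq_zero_of_mem_ball (Metric.ball_subset_ball (min_le_right _ _) hnb)
    exact hsε.1.ne' (show m • a + n • b = 0 by rw [hma0, hnb0, add_zero])
  obtain ⟨c, hc⟩ := AddSubgroup.cyclic_of_isolated_zero hε hisolated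
  have hcyclic : AddSubgroup.zmultiples a ⊔ AddSubgroup.zmultiples b ≤
      AddSubgroup.zmultiples c := (hc.trans (AddSubgroup.zmultiples_eq_closure c).symm).le
  obtain ⟨m, n, hmn, hma⟩ := exists_zsmul_add_zsmul_eq_zero_of_mem_zmultiples
    (hcyclic (AddSubgroup.mem_sup_left (AddSubgroup.mem_zmultiples a)))
    (hcyclic (AddSubgroup.mem_sup_right (AddSubgroup.mem_zmultiples b))) ha0 hb0
  exact hma (hA.zsmul_eq_zero_of_zsmul_add_zsmul_eq_zero ha hb hab hmn)

lemma Indep.of_linearIndepOn {G : Type*} [AddCommGroup G] {A : Set G}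
    (h : LinearIndepOn ℤ id A) : Indep A :=
  ⟨by simpa using h.zero_notMem_image, fun F hF z hz a ha => by
    rw [linearIndepOn_iff'.1 h F z hF hz a ha, zero_smul]⟩

theorem stmt2 :
    (∀ A : Set ℝ, TopIndep A → A.Subsingleton) ∧
    (∃ B : Set ℝ, Indep B ∧ Cardinal.mk B = Cardinal.continuum) := by
  refine ⟨fun A hA => Real.subsingleton_of_topIndep hA,
    Module.Basis.ofVectorSpaceIndex ℚ ℝ, ?_, ?_⟩
  · exact Indep.of_linearIndepOn
      ((Module.Basis.ofVectorSpaceIndex.linearIndependent ℚ ℝ).restrict_scalars' ℤ)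
  · rw [(Module.Basis.ofVectorSpace ℚ ℝ).mk_eq_rank'', Real.rank_rat_real]
end

section
/- If {H_a : a ∈ A} is a family of Hausdorff abelian topological groups, H = ⊕_{a∈A} H_a is their direct sum with the subspace topology from the product, and x_a ∈ H_a for each a, then the set X = {x_a : a ∈ A} is absolutely Cauchy summable in H. -/
open Filter Topology

theorem exists_finset_forall_eq_imp_mem_of_mem_nhds {ι : Type*} {A : ι → Type*}
    [∀ i, TopologicalSpace (A i)] {x : ∀ i, A i} {s : Set (∀ i, A i)} (hs : s ∈ 𝓝 x) :
    ∃ I : Finset ι, ∀ y : ∀ i, A i, (∀ i ∈ I, y i = x i) → y ∈ s := by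
  simp only [nhds_pi, Filter.mem_pi'] at hs
  obtain ⟨I, t, htx, hts⟩ := hs
  exact ⟨I, fun y hy => hts fun i hi => hy i hi ▸ mem_of_mem_nhds (htx i)⟩

theorem exists_finset_forall_eq_imp_mem_of_mem_nhds_subtype {ι : Type*} {A : ι → Type*}
    [∀ i, TopologicalSpace (A i)] {S : Set (∀ i, A i)} {x : S} {s : Set S} (hs : s ∈ 𝓝 x) :
    ∃ I : Finset ι, ∀ y : S, (∀ i ∈ I, (y : ∀ i, A i) i = (x : ∀ i, A i) i) → y ∈ s := by
  obtain ⟨u, hu, hus⟩ := (mem_nhds_subtype S x s).1 hs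
  obtain ⟨I, hI⟩ := exists_finset_forall_eq_imp_mem_of_mem_nhds hu
  exact ⟨I, fun y hy => hus (hI y hy)⟩

theorem closure_range_sing_diff_image_le {ι : Type*} [DecidableEq ι] {H : ι → Type*}
    [∀ i, AddCommGroup (H i)] (x : ∀ i, H i) (I : Set ι) :
    AddSubgroup.closure (Set.range (fun i => sing i (x i)) \ (fun i => sing i (x i)) '' I) ≤
      (AddSubgroup.pi I fun _ => ⊥).comap (FinSupp ι H).subtype := by
  rw [AddSubgroup.closure_le]
  rintro _ ⟨⟨b, rfl⟩, hbI⟩ i hi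
  have hib : i ≠ b := by
    rintro rfl
    exact hbI (Set.mem_image_of_mem _ hi)
  exact (AddSubgroup.mem_bot).2 (Pi.single_eq_of_ne hib (x b))

theorem stmt3_general {A : Type*} [DecidableEq A] {H : A → Type*} [∀ a, AddCommGroup (H a)]
    [∀ a, TopologicalSpace (H a)]
    (x : Π a, H a) :
    AbsCauchySummable (Set.range fun a : A => sing (H := H) a (x a)) := by
  classical
  intro U hU
  obtain ⟨I, hI⟩ := exists_finset_forall_eq_imp_mem_of_mem_nhds_subtype hU
  refine ⟨I.image fun a => sing a (x a), ?_, fun g hg => hI g fun a ha => ?_⟩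
  · simp only [Finset.coe_image, Set.image_subset_iff, Set.preimage_range, Set.subset_univ]
  · rw [Finset.coe_image] at hg
    exact (AddSubgroup.mem_bot).1 (closure_range_sing_diff_image_le x I hg a ha)

theorem stmt3 {A : Type*} [DecidableEq A] {H : A → Type*} [∀ a, AddCommGroup (H a)]
    [∀ a, TopologicalSpace (H a)] [∀ a, IsTopologicalAddGroup (H a)] [∀ a, T2Space (H a)]
    (x : Π a, H a) :
    AbsCauchySummable (Set.range fun a : A => sing (H := H) a (x a)) :=
  stmt3_general x
end

section
/- If {H_a : a ∈ A} is a family of Hausdorff abelian topological groups and x_a ∈ H_a \ {0} for every a ∈ A, then {x_a : a ∈ A} is topologically independent in the direct sum ⊕_{a∈A} H_a. -/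
/- Proof idea: the `a`-th coordinate of an integer combination `∑ z_b • sing b (x b)` is exactly
`z_a • x_a`, while every other term vanishes there. So a basic product neighbourhood `∏_{a ∈ I} t_a`
of `0` in the direct sum already works as `U`: if the sum lies in it, each term agrees with the
sum on its own coordinate and is `0 ∈ t_a` on all the others. -/

open Filter Topology

theorem exists_pi_subset_of_mem_nhds_zero {ι : Type*} {H : ι → Type*} [∀ i, AddCommGroup (H i)]
    [∀ i, TopologicalSpace (H i)] {W : Set (FinSupp ι H)} (hW : W ∈ 𝓝 0) :
    ∃ I : Set ι, I.Finite ∧ ∃ t : Π i, Set (H i), (∀ i, t i ∈ 𝓝 0) ∧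
      Subtype.val ⁻¹' I.pi t ⊆ W := by
  obtain ⟨W', hW', hW'W⟩ := (mem_nhds_subtype _ _ _).1 hW
  rw [AddSubgroup.coe_zero, nhds_pi, Filter.mem_pi] at hW'
  obtain ⟨I, hI, t, ht, htW'⟩ := hW'
  exact ⟨I, hI, t, ht, (Set.preimage_mono htW').trans hW'W⟩

section SingLemmas
variable {ι : Type*} [DecidableEq ι] {H : ι → Type*} [∀ i, AddCommGroup (H i)]

theorem coe_sing (i : ι) (y : H i) : ((sing i y : FinSupp ι H) : Π i, H i) = Pi.single i y :=
  rfl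

theorem sing_ne_zero {i : ι} {y : H i} (hy : y ≠ 0) : sing i y ≠ 0 := fun h =>
  hy (by simpa [coe_sing] using congrFun (congrArg Subtype.val h) i)

theorem sum_smul_sing_apply {x : Π i, H i} {F : Finset (FinSupp ι H)}
    (hF : ↑F ⊆ Set.range fun i => sing i (x i)) (z : FinSupp ι H → ℤ) {a : ι}
    (ha : sing a (x a) ∈ F) :
    ((∑ w ∈ F, z w • w : FinSupp ι H) : Π i, H i) a = z (sing a (x a)) • x a := by
  rw [AddSubgroup.val_finsetSum, Finset.sum_apply]
  refine (Finset.sum_eq_single _ (fun w hw hne => ?_) (absurd ha)).trans ?_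
  · obtain ⟨b, rfl⟩ := hF hw
    have hba : b ≠ a := by rintro rfl; exact hne rfl
    simp [coe_sing, Pi.single_eq_of_ne' hba]
  · simp [coe_sing]

end SingLemmas

theorem stmt4_general {A : Type*} [DecidableEq A] {H : A → Type*} [∀ a, AddCommGroup (H a)]
    [∀ a, TopologicalSpace (H a)]
    (x : Π a, H a) (hx : ∀ a, x a ≠ 0) :
    TopIndep (Set.range fun a : A => sing (H := H) a (x a)) := by
  refine ⟨fun ⟨a, ha⟩ => sing_ne_zero (hx a) ha, fun W hW => ?_⟩
  obtain ⟨I, hI, t, ht, hIW⟩ := exists_pi_subset_of_mem_nhds_zero hW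
  refine ⟨Subtype.val ⁻¹' I.pi t,
    (mem_nhds_subtype _ _ _).2 ⟨_, set_pi_mem_nhds hI fun i _ => ht i, subset_rfl⟩, ?_⟩
  intro F hF z hsum w hw
  obtain ⟨b, rfl⟩ := hF hw
  refine hIW fun a ha => ?_
  by_cases hab : a = b
  · subst hab
    have hsum_a := hsum a ha
    rw [sum_smul_sing_apply hF z hw] at hsum_a
    simpa [coe_sing] using hsum_a
  · simpa [coe_sing, Pi.single_eq_of_ne hab] using mem_of_mem_nhds (ht a)

theorem stmt4 {A : Type*} [DecidableEq A] {H : A → Type*} [∀ a, AddCommGroup (H a)]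
    [∀ a, TopologicalSpace (H a)] [∀ a, IsTopologicalAddGroup (H a)] [∀ a, T2Space (H a)]
    (x : Π a, H a) (hx : ∀ a, x a ≠ 0) :
    TopIndep (Set.range fun a : A => sing (H := H) a (x a)) :=
  stmt4_general x hx
end

section
/- For a subset A of a Hausdorff abelian topological group G with 0 ∉ A, the Kalton map κ_A : ⊕_{a∈A}⟨a⟩ → G is continuous if and only if A is absolutely Cauchy summable in G. -/
open Filter Topology

/-!
Since `κ_A` is a homomorphism, it is continuous iff it is continuous at `0`. Every neighbourhood
of `0` in `S_A` contains the subgroup of families vanishing on some finite `I ⊆ A`, and `κ_A`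
maps this subgroup onto a group containing `⟨A \ I⟩`; this gives absolute Cauchy summability.
Conversely, given a finite `F ⊆ A`, `κ_A f` is the sum of the finitely many coordinates of `f`
indexed by `F`, which depend continuously on `f`, and a tail lying in `⟨A \ F⟩`.
-/

local notation "𝕊" A => FinSupp A fun a => AddSubgroup.zmultiples (Subtype.val a)

namespace FinSupp

variable {ι : Type*} {H : ι → Type*} [∀ i, AddCommGroup (H i)] [∀ i, TopologicalSpace (H i)]

theorem exists_finset_forall_eq_zero_mem_of_mem_nhds {V : Set (FinSupp ι H)}
    (hV : V ∈ 𝓝 0) : ∃ I : Finset ι, ∀ f : FinSupp ι H, (∀ i ∈ I, f.1 i = 0) → f ∈ V := by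
  obtain ⟨s, hs, hsV⟩ := (mem_nhds_subtype _ _ _).1 hV
  rw [AddSubgroup.coe_zero, nhds_pi, Filter.mem_pi'] at hs
  obtain ⟨I, t, ht, hts⟩ := hs
  refine ⟨I, fun f hf => hsV (hts fun i hi => ?_)⟩
  rw [hf i hi]
  exact mem_of_mem_nhds (ht i)

end FinSupp

section Kalton

variable {G : Type*} [AddCommGroup G] (A : Set G)

theorem kalton_add (f g : 𝕊 A) : kalton A (f + g) = kalton A f + kalton A g :=
  finsum_add_distrib (f.2.subset fun a ha h => ha (by simp [h]))
    (g.2.subset fun a ha h => ha (by simp [h]))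

noncomputable def kaltonHom : (𝕊 A) →+ G := AddMonoidHom.mk' (kalton A) (kalton_add A)

theorem kalton_sing [DecidableEq A] (a : A) (x : AddSubgroup.zmultiples (a : G)) :
    kalton A (sing a x) = x := by
  rw [kalton, finsum_eq_single _ a fun b hb => by simp [sing, Pi.single_eq_of_ne hb]]
  simp [sing]

theorem closure_diff_le_map_kaltonHom (I : Finset A) :
    AddSubgroup.closure (A \ I.map (Function.Embedding.subtype _)) ≤
      ((AddSubgroup.pi I fun _ => ⊥).addSubgroupOf (𝕊 A)).map (kaltonHom A) := by
  classical
  refine AddSubgroup.closure_le _ |>.2 fun x ⟨hxA, hxI⟩ => ?_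
  refine ⟨sing ⟨x, hxA⟩ ⟨x, AddSubgroup.mem_zmultiples x⟩, ?_, kalton_sing A _ _⟩
  refine AddSubgroup.mem_addSubgroupOf.2 <| (AddSubgroup.mem_pi _).2 fun a ha => ?_
  have hne : a ≠ ⟨x, hxA⟩ := by
    rintro rfl
    exact hxI (Finset.mem_map_of_mem _ ha)
  simp [sing, Pi.single_eq_of_ne hne]

open Classical in
theorem kalton_sub_sum_mem_closure (F : Finset G) (f : 𝕊 A) :
    kalton A f - ∑ a ∈ F.subtype (· ∈ A), (f.1 a : G) ∈ AddSubgroup.closure (A \ F) := by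
  have hsupp : (Function.support fun a => (f.1 a : G)) ⊆ ↑(f.2.toFinset ∪ F.subtype (· ∈ A)) :=
    fun a ha => Finset.mem_union_left _ <|
      f.2.mem_toFinset.2 fun (h : f.1 a = 0) => ha (by simp [h])
  rw [kalton, finsum_eq_finsetSum_of_support_subset _ hsupp,
    ← Finset.sum_sdiff_eq_sub Finset.subset_union_right]
  refine AddSubgroup.sum_mem _ fun a ha => ?_
  have haF : (a : G) ∈ A \ F := ⟨a.2, fun h => (Finset.mem_sdiff.1 ha).2 (Finset.mem_subtype.2 h)⟩
  exact AddSubgroup.zmultiples_le.2 (AddSubgroup.subset_closure haF) (f.1 a).2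

theorem absCauchySummable_of_continuous_kalton [TopologicalSpace G]
    (hc : Continuous (kalton A)) : AbsCauchySummable A := by
  intro U hU
  have hU' : kalton A ⁻¹' U ∈ 𝓝 0 :=
    hc.continuousAt.preimage_mem_nhds (by rwa [← map_zero (kaltonHom A)] at hU)
  obtain ⟨I, hI⟩ := FinSupp.exists_finset_forall_eq_zero_mem_of_mem_nhds hU'
  refine ⟨I.map (Function.Embedding.subtype _), by simp, fun g hg => ?_⟩
  obtain ⟨f, hf, rfl⟩ := closure_diff_le_map_kaltonHom A I hg
  exact hI f fun a ha => (AddSubgroup.mem_pi _).1 (AddSubgroup.mem_addSubgroupOf.1 hf) a ha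

theorem AbsCauchySummable.continuous_kalton [TopologicalSpace G] [IsTopologicalAddGroup G]
    {A : Set G} (hs : AbsCauchySummable A) : Continuous (kalton A) := by
  classical
  refine continuous_of_continuousAt_zero (kaltonHom A) ?_
  rw [ContinuousAt, map_zero, tendsto_def]
  intro W hW
  obtain ⟨W₁, hW₁, hW₁W⟩ := exists_nhds_zero_half hW
  obtain ⟨F, -, hF⟩ := hs W₁ hW₁
  let head : (𝕊 A) → G := fun f => ∑ a ∈ F.subtype (· ∈ A), (f.1 a : G)
  have hhead : Tendsto head (𝓝 0) (𝓝 0) := by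
    have : Continuous head := continuous_finsetSum _ fun a _ =>
      continuous_subtype_val.comp <| (continuous_apply a).comp continuous_subtype_val
    simpa [head] using this.tendsto 0
  filter_upwards [tendsto_def.1 hhead W₁ hW₁] with f hf
  have hsplit := hW₁W _ (hF (kalton_sub_sum_mem_closure A F f)) _ hf
  rwa [sub_add_cancel] at hsplit

end Kalton

theorem stmt5_general {G : Type*} [AddCommGroup G] [TopologicalSpace G] [IsTopologicalAddGroup G]
    (A : Set G) :
    Continuous (kalton A) ↔ AbsCauchySummable A :=
  ⟨absCauchySummable_of_continuous_kalton A, AbsCauchySummable.continuous_kalton⟩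

theorem stmt5 {G : Type*} [AddCommGroup G] [TopologicalSpace G] [IsTopologicalAddGroup G]
    [T2Space G] (A : Set G) (h0 : (0 : G) ∉ A) :
    Continuous (kalton A) ↔ AbsCauchySummable A :=
  stmt5_general A
end

section
/- Every topologically independent subset of a Hausdorff topological vector space is linearly independent over ℝ. -/
/-! If `∑ c a • a = 0` with `c a₀ ≠ 0`, recurrence of `n ↦ n • (c a)ₐ` on the compact torus
(simultaneous Dirichlet approximation) yields `n ≥ 1` with every `n * c a` within `δ` of an
integer `z a`. Then `∑ z a • a = ∑ (z a - n * c a) • a` is close to `0`, so by topological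
independence `z a₀ • a₀` is close to `0`; on the line `ℝ • a₀` this forces `z a₀ = 0`, whence
`|n * c a₀| < δ ≤ |c a₀|`, which is absurd. -/

open Filter Topology

theorem exists_pos_nsmul_mem_of_mem_nhds_zero {G : Type*} [AddGroup G] [TopologicalSpace G]
    [IsTopologicalAddGroup G] [CompactSpace G] (x : G) {U : Set G} (hU : U ∈ 𝓝 0) :
    ∃ n : ℕ, 0 < n ∧ n • x ∈ U := by
  obtain ⟨y, -, hy⟩ := isCompact_univ.exists_clusterPt
    (f := map (fun n : ℕ => n • x) atTop) (le_principal_iff.2 univ_mem)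
  have hdiff : Tendsto (fun p : G × G => -p.1 + p.2) (𝓝 (y, y)) (𝓝 0) := by
    simpa using (by fun_prop : Continuous fun p : G × G => -p.1 + p.2).tendsto (y, y)
  have hpre : (fun p : G × G => -p.1 + p.2) ⁻¹' U ∈ 𝓝 y ×ˢ 𝓝 y := by
    rw [← nhds_prod_eq]; exact hdiff hU
  obtain ⟨V, hV, hVU⟩ := mem_prod_self_iff.1 hpre
  have hfreq : ∃ᶠ n in atTop, n • x ∈ V := (mapClusterPt_iff_frequently.1 hy) V hV
  obtain ⟨k, -, hk⟩ := frequently_atTop.1 hfreq 0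
  obtain ⟨l, hkl, hl⟩ := frequently_atTop.1 hfreq (k + 1)
  refine ⟨l - k, by omega, ?_⟩
  have hsub : -(k • x) + l • x = (l - k) • x := by
    rw [← Nat.add_sub_cancel' (show k ≤ l by omega), add_nsmul, neg_add_cancel_left,
      Nat.add_sub_cancel_left]
  exact hsub ▸ hVU (Set.mk_mem_prod hk hl)

theorem exists_pos_nat_abs_mul_sub_round_lt {ι : Type*} [Finite ι] (c : ι → ℝ) {δ : ℝ}
    (hδ : 0 < δ) : ∃ n : ℕ, 0 < n ∧ ∀ i, |n * c i - round (n * c i)| < δ := by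
  have := Fintype.ofFinite ι
  obtain ⟨n, hn, hball⟩ := exists_pos_nsmul_mem_of_mem_nhds_zero
    (fun i => (c i : UnitAddCircle)) (Metric.ball_mem_nhds 0 hδ)
  rw [mem_ball_zero_iff, pi_norm_lt_iff hδ] at hball
  refine ⟨n, hn, fun i => ?_⟩
  simpa [← UnitAddCircle.norm_eq] using hball i

section TopologicalVectorSpace

variable {𝕜 E : Type*} [NontriviallyNormedField 𝕜] [AddCommGroup E] [Module 𝕜 E]
  [TopologicalSpace E] [IsTopologicalAddGroup E] [ContinuousSMul 𝕜 E]

theorem exists_forall_norm_lt_sum_smul_mem {ι : Type*} (s : Finset ι) (v : ι → E) {U : Set E}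
    (hU : U ∈ 𝓝 0) : ∃ ε > 0, ∀ t : ι → 𝕜, (∀ i ∈ s, ‖t i‖ < ε) → ∑ i ∈ s, t i • v i ∈ U := by
  have hcont : Continuous fun t : s → 𝕜 => ∑ i : s, t i • v i := by fun_prop
  have hpre : (fun t : s → 𝕜 => ∑ i : s, t i • v i) ⁻¹' U ∈ 𝓝 0 :=
    hcont.continuousAt.preimage_mem_nhds (by simpa using hU)
  obtain ⟨ε, hε, hball⟩ := Metric.mem_nhds_iff.1 hpre
  refine ⟨ε, hε, fun t ht => ?_⟩
  have hmem : (fun i : s => t i) ∈ Metric.ball 0 ε := by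
    rw [mem_ball_zero_iff, pi_norm_lt_iff hε]
    exact fun i => ht i i.2
  simpa only [Set.mem_preimage, Finset.sum_coe_sort s fun i => t i • v i] using hball hmem

theorem exists_mem_nhds_zero_forall_smul_mem_norm_lt_one [CompleteSpace 𝕜] [T2Space E] {a : E}
    (ha : a ≠ 0) : ∃ W ∈ 𝓝 (0 : E), ∀ t : 𝕜, t • a ∈ W → ‖t‖ < 1 := by
  have hnhds : 𝓝 (0 : 𝕜) = comap (fun t : 𝕜 => t • a) (𝓝 0) := by
    simpa using (isClosedEmbedding_smul_left (𝕜 := 𝕜) ha).isInducing.nhds_eq_comap 0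
  have hball : Metric.ball (0 : 𝕜) 1 ∈ comap (fun t : 𝕜 => t • a) (𝓝 0) :=
    hnhds ▸ Metric.ball_mem_nhds 0 one_pos
  obtain ⟨W, hW, hWball⟩ := mem_comap.1 hball
  exact ⟨W, hW, fun t ht => mem_ball_zero_iff.1 (hWball ht)⟩

end TopologicalVectorSpace

theorem TopIndep.eq_zero_of_sum_smul_eq_zero {E : Type*} [AddCommGroup E] [Module ℝ E]
    [TopologicalSpace E] [IsTopologicalAddGroup E] [ContinuousSMul ℝ E] [T2Space E] {A : Set E}
    (hA : TopIndep A) {F : Finset E} (hFA : ↑F ⊆ A) {c : E → ℝ} (hc : ∑ a ∈ F, c a • a = 0)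
    {a₀ : E} (ha₀ : a₀ ∈ F) : c a₀ = 0 := by
  by_contra hc₀
  obtain ⟨W, hW, hWa₀⟩ := exists_mem_nhds_zero_forall_smul_mem_norm_lt_one (𝕜 := ℝ)
    (ne_of_mem_of_not_mem (hFA ha₀) hA.1)
  obtain ⟨U, hU, hUW⟩ := hA.2 W hW
  obtain ⟨ε, hε, hεU⟩ := exists_forall_norm_lt_sum_smul_mem (𝕜 := ℝ) F id hU
  obtain ⟨n, hn, hround⟩ :=
    exists_pos_nat_abs_mul_sub_round_lt (fun a : F => c a) (lt_min hε (abs_pos.2 hc₀))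
  have hzU : ∑ a ∈ F, round (n * c a) • a ∈ U := by
    have hdiff : ∑ a ∈ F, round (n * c a) • a = ∑ a ∈ F, ((round (n * c a) : ℝ) - n * c a) • a := by
      simp only [sub_smul, Finset.sum_sub_distrib, mul_smul, ← Finset.smul_sum, hc, smul_zero,
        sub_zero, Int.cast_smul_eq_zsmul]
    rw [hdiff]
    refine hεU _ fun a ha => ?_
    rw [Real.norm_eq_abs, abs_sub_comm]
    exact (hround ⟨a, ha⟩).trans_le (min_le_left _ _)
  have hround₀ : round (n * c a₀) = 0 := by
    have hlt := hWa₀ (round (n * c a₀)) (by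
      rw [Int.cast_smul_eq_zsmul]
      exact hUW F hFA (fun a => round (n * c a)) hzU a₀ ha₀)
    rwa [Real.norm_eq_abs, ← Int.cast_abs, ← Int.cast_one, Int.cast_lt, Int.abs_lt_one_iff] at hlt
  have hsmall : |n * c a₀ - round (n * c a₀)| < |c a₀| :=
    (hround ⟨a₀, ha₀⟩).trans_le (min_le_right _ _)
  rw [hround₀, Int.cast_zero, sub_zero, abs_mul, Nat.abs_cast] at hsmall
  exact hsmall.not_ge (le_mul_of_one_le_left (abs_nonneg _) (by exact_mod_cast hn))

theorem stmt9 {E : Type*} [AddCommGroup E] [Module ℝ E] [TopologicalSpace E]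
    [IsTopologicalAddGroup E] [ContinuousSMul ℝ E] [T2Space E]
    (A : Set E) (hA : TopIndep A) :
    LinearIndependent ℝ ((↑) : A → E) := by
  refine linearIndependent_subtype_iff.2 <| linearIndepOn_iff.2 fun l hl hsum =>
    Finsupp.ext fun a => ?_
  by_cases ha : a ∈ l.support
  · exact hA.eq_zero_of_sum_smul_eq_zero ((Finsupp.mem_supported ℝ l).1 hl)
      (by simpa [Finsupp.linearCombination_apply, Finsupp.sum] using hsum) ha
  · exact Finsupp.notMem_support_iff.1 ha
end

section
/- A subset A of a Hausdorff abelian topological group G is both topologically independent and absolutely Cauchy summable in G if and only if the Kalton map κ_A : S_A → G is a topologically isomorphic embedding. -/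
open Filter Topology

/-!
The Kalton map `κ_A` is an additive homomorphism, so it is a topological embedding iff it is
injective and `𝓝 0 = comap κ_A (𝓝 0)`. A basic neighbourhood of `0` in `S_A` only constrains
finitely many coordinates. Hence `𝓝 0 ≤ comap κ_A (𝓝 0)`, i.e. continuity of `κ_A`, says that
the subgroups generated by the cofinite parts `A \ F` become small: absolute Cauchy
summability. The reverse inequality `comap κ_A (𝓝 0) ≤ 𝓝 0` is topological independence, up
to the finitely many coordinates outside which absolute Cauchy summability already makes every
term small. Injectivity follows from independence since `G` is T₁.
-/

open Set Function

theorem Topology.isEmbedding_iff_forall_isOpen_image_eq_inter_range {X Y : Type*}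
    [TopologicalSpace X] [TopologicalSpace Y] {f : X → Y} :
    IsEmbedding f ↔ Injective f ∧ Continuous f ∧
      ∀ O : Set X, IsOpen O → ∃ V : Set Y, IsOpen V ∧ f '' O = V ∩ range f := by
  refine ⟨fun hf => ⟨hf.injective, hf.continuous, fun O hO => ?_⟩, ?_⟩
  · obtain ⟨V, hV, rfl⟩ := hf.isOpen_iff.1 hO
    exact ⟨V, hV, image_preimage_eq_inter_range⟩
  · rintro ⟨hinj, hcont, himage⟩
    refine ⟨⟨le_antisymm (continuous_iff_le_induced.1 hcont) fun O hO => ?_⟩, hinj⟩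
    obtain ⟨V, hV, hOV⟩ := himage O hO
    refine isOpen_induced_iff.2 ⟨V, hV, ?_⟩
    rw [← preimage_inter_range, ← hOV, hinj.preimage_image]

theorem TopIndep.indep_s11 {G : Type*} [AddCommGroup G] [TopologicalSpace G] [T1Space G] {A : Set G}
    (hA : TopIndep A) : Indep A := by
  refine ⟨hA.1, fun F hFA z hz a ha => ?_⟩
  by_contra hne
  obtain ⟨U, hU, hUW⟩ := hA.2 _ (compl_singleton_mem_nhds (Ne.symm hne))
  exact hUW F hFA z (hz ▸ mem_of_mem_nhds hU) a ha rfl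

namespace Kalton

variable {G : Type*} [AddCommGroup G] {A : Set G}

abbrev SA (A : Set G) := ↥(FinSupp A fun a => AddSubgroup.zmultiples (a : G))

def coords (A : Set G) : SA A →+ (A → G) :=
  (AddMonoidHom.pi fun a : A => (AddSubgroup.zmultiples (a : G)).subtype.comp
    (Pi.evalAddMonoidHom _ a)).comp (FinSupp A _).subtype

@[simp] theorem coords_apply (f : SA A) (a : A) : coords A f a = (f.1 a : G) := rfl

theorem coords_injective : Injective (coords A) :=
  fun _ _ h => Subtype.ext <| funext fun a => Subtype.ext (congrFun h a)

theorem finite_support_coords (f : SA A) : (support (coords A f)).Finite :=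
  f.2.subset fun a ha h => ha (by simp [h])

theorem kalton_eq_finsum (f : SA A) : kalton A f = ∑ᶠ a, coords A f a := rfl

theorem kalton_eq_sum (f : SA A) {T : Finset A} (hT : support (coords A f) ⊆ T) :
    kalton A f = ∑ a ∈ T, coords A f a :=
  finsum_eq_sum_of_support_subset _ hT

noncomputable def kaltonHom (A : Set G) : SA A →+ G where
  toFun := kalton A
  map_zero' := by simp [kalton_eq_finsum]
  map_add' f g := by
    simp only [kalton_eq_finsum, map_add, Pi.add_apply]
    exact finsum_add_distrib (finite_support_coords f) (finite_support_coords g)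

@[simp] theorem coe_kaltonHom : ⇑(kaltonHom A) = kalton A := rfl

theorem coords_sing [DecidableEq A] (a : A) (x : AddSubgroup.zmultiples (a : G)) :
    coords A (sing a x) = Pi.single a (x : G) := by
  funext b
  by_cases hb : b = a
  · subst hb; simp [sing]
  · simp [sing, hb]

theorem kalton_sing [DecidableEq A] (a : A) (x : AddSubgroup.zmultiples (a : G)) :
    kalton A (sing a x) = x := by
  rw [kalton_eq_finsum, coords_sing, finsum_eq_single _ a fun b hb => Pi.single_eq_of_ne hb _,
    Pi.single_eq_same]

open Classical in
noncomputable def combination (A : Set G) (F : Finset G) (z : G → ℤ) : SA A :=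
  ⟨fun a => if (a : G) ∈ F then ⟨z a • a, zsmul_mem (AddSubgroup.mem_zmultiples _) _⟩ else 0,
    (F.finite_toSet.preimage Subtype.val_injective.injOn).subset fun a ha => by
      by_contra h
      exact ha (if_neg h)⟩

open Classical in
theorem coords_combination (F : Finset G) (z : G → ℤ) (a : A) :
    coords A (combination A F z) a = if (a : G) ∈ F then z a • (a : G) else 0 := by
  by_cases ha : (a : G) ∈ F <;> simp [combination, ha]

theorem kalton_combination {F : Finset G} (hF : ↑F ⊆ A) (z : G → ℤ) :
    kalton A (combination A F z) = ∑ g ∈ F, z g • g := by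
  classical
  have hsupp : support (coords A (combination A F z)) ⊆
      ((F.preimage Subtype.val Subtype.val_injective.injOn : Finset A) : Set A) :=
    fun a ha => Finset.mem_preimage.2 <| by
      by_contra h
      exact ha (by rw [coords_combination, if_neg h])
  rw [kalton_eq_sum _ hsupp]
  refine (Finset.sum_congr rfl fun a ha => ?_).trans (Finset.sum_preimage Subtype.val F _
    (fun g => z g • g) fun g hg hr => absurd ⟨⟨g, hF hg⟩, rfl⟩ hr)
  rw [coords_combination, if_pos (Finset.mem_preimage.1 ha)]

theorem exists_eq_combination (f : SA A) :
    ∃ (F : Finset G) (z : G → ℤ), ↑F ⊆ A ∧ f = combination A F z := by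
  classical
  choose n hn using fun a : A => AddSubgroup.mem_zmultiples_iff.1 (f.1 a).2
  refine ⟨(finite_support_coords f).toFinset.image Subtype.val,
    fun g => if h : g ∈ A then n ⟨g, h⟩ else 0, by simp, coords_injective <| funext fun a => ?_⟩
  rw [coords_combination]
  split_ifs with ha haA
  · simp [hn]
  · exact absurd a.2 haA
  · by_contra h
    exact ha (Finset.mem_image_of_mem _ ((finite_support_coords f).mem_toFinset.2 h))

theorem kalton_sub_sum_mem_closure (f : SA A) (F : Finset G) :
    kalton A f - ∑ a ∈ F.preimage Subtype.val Subtype.val_injective.injOn, coords A f a ∈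
      AddSubgroup.closure (A \ F) := by
  classical
  set T := F.preimage Subtype.val Subtype.val_injective.injOn
  have hsupp : support (coords A f) ⊆ ↑((finite_support_coords f).toFinset ∪ T) := fun a ha =>
    Finset.mem_union_left _ ((finite_support_coords f).mem_toFinset.2 ha)
  rw [kalton_eq_sum f hsupp, ← Finset.sum_sdiff Finset.subset_union_right, add_sub_cancel_right]
  refine AddSubgroup.sum_mem _ fun a ha => ?_
  have haF : (a : G) ∉ F := fun h => (Finset.mem_sdiff.1 ha).2 (Finset.mem_preimage.2 h)
  have ha : (a : G) ∈ A \ F := ⟨a.2, haF⟩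
  exact AddSubgroup.zmultiples_le.2 (AddSubgroup.subset_closure ha) (f.1 a).2

theorem closure_diff_image_le_map_kalton (I : Set A) :
    AddSubgroup.closure (A \ Subtype.val '' I) ≤
      ((AddSubgroup.pi I fun _ => ⊥).comap (coords A)).map (kaltonHom A) := by
  classical
  rw [AddSubgroup.closure_le]
  rintro x ⟨hxA, hxI⟩
  refine ⟨sing ⟨x, hxA⟩ ⟨x, AddSubgroup.mem_zmultiples x⟩, fun a ha => ?_, kalton_sing _ _⟩
  have hax : a ≠ ⟨x, hxA⟩ := fun h => hxI ⟨a, ha, congrArg Subtype.val h⟩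
  show coords A _ a ∈ (⊥ : AddSubgroup G)
  rw [AddSubgroup.mem_bot, coords_sing, Pi.single_eq_of_ne hax]

theorem _root_.Indep.kalton_injective (hA : Indep A) : Injective (kalton A) := by
  refine (injective_iff_map_eq_zero (kaltonHom A)).2 fun f hf => ?_
  obtain ⟨F, z, hFA, rfl⟩ := exists_eq_combination f
  rw [coe_kaltonHom, kalton_combination hFA] at hf
  refine coords_injective <| funext fun a => ?_
  rw [coords_combination, map_zero]
  split_ifs with ha
  · exact hA.2 F hFA z hf a ha
  · rfl

section Topology

variable [TopologicalSpace G]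

theorem isInducing_coords : IsInducing (coords A) :=
  (IsInducing.piMap fun _ => .subtypeVal).comp .subtypeVal

theorem continuous_coords_apply (a : A) : Continuous fun f : SA A => coords A f a :=
  (continuous_apply a).comp isInducing_coords.continuous

theorem nhds_zero_hasBasis :
    (𝓝 (0 : SA A)).HasBasis (fun IW : Set A × Set G => IW.1.Finite ∧ IW.2 ∈ 𝓝 0)
      fun IW => coords A ⁻¹' IW.1.pi fun _ => IW.2 := by
  rw [isInducing_coords.nhds_eq_comap, map_zero, nhds_pi]
  exact (𝓝 (0 : G)).basis_sets.pi_self.comap _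

theorem _root_.TopIndep.comap_kalton_nhds_zero_le (hA : TopIndep A) :
    comap (kalton A) (𝓝 0) ≤ 𝓝 0 := by
  refine nhds_zero_hasBasis.ge_iff.2 ?_
  rintro ⟨I, W⟩ ⟨-, hW⟩
  obtain ⟨U, hU, hUW⟩ := hA.2 W hW
  refine mem_comap.2 ⟨U, hU, fun f hf a _ => ?_⟩
  obtain ⟨F, z, hFA, rfl⟩ := exists_eq_combination f
  rw [mem_preimage, kalton_combination hFA] at hf
  show coords A (combination A F z) a ∈ W
  rw [coords_combination]
  split_ifs with ha
  · exact hUW F hFA z hf a ha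
  · exact mem_of_mem_nhds hW

theorem topIndep_of_comap_kalton_nhds_zero_le (h0 : (0 : G) ∉ A) (hA : AbsCauchySummable A)
    (h : comap (kalton A) (𝓝 0) ≤ 𝓝 0) : TopIndep A := by
  classical
  refine ⟨h0, fun W hW => ?_⟩
  obtain ⟨F₀, -, hF₀W⟩ := hA W hW
  have hbox : coords A ⁻¹' ((Subtype.val ⁻¹' ↑F₀ : Set A).pi fun _ => W) ∈ 𝓝 (0 : SA A) :=
    (nhds_zero_hasBasis (A := A)).mem_of_mem (i := (Subtype.val ⁻¹' ↑F₀, W))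
      ⟨F₀.finite_toSet.preimage Subtype.val_injective.injOn, hW⟩
  obtain ⟨U, hU, hUW⟩ := mem_comap.1 (h hbox)
  refine ⟨U, hU, fun F hFA z hz a ha => ?_⟩
  by_cases ha₀ : a ∈ F₀
  · have hcomb : kalton A (combination A F z) ∈ U := by rwa [kalton_combination hFA]
    have hmem : coords A (combination A F z) ⟨a, hFA ha⟩ ∈ W := hUW hcomb ⟨a, hFA ha⟩ ha₀
    rwa [coords_combination, if_pos ha] at hmem
  · have ha : a ∈ A \ ↑F₀ := ⟨hFA ha, ha₀⟩
    exact hF₀W (zsmul_mem (AddSubgroup.subset_closure ha) _)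

variable [IsTopologicalAddGroup G]

theorem isEmbedding_kalton_iff :
    IsEmbedding (kalton A) ↔ 𝓝 0 = comap (kalton A) (𝓝 0) ∧ Injective (kalton A) := by
  rw [isEmbedding_iff, ← coe_kaltonHom, IsTopologicalAddGroup.isInducing_iff_nhds_zero]

theorem tendsto_kalton_nhds_zero_iff :
    Tendsto (kalton A) (𝓝 0) (𝓝 0) ↔ AbsCauchySummable A := by
  refine ⟨fun h U hU => ?_, fun hA U hU => ?_⟩
  · obtain ⟨⟨I, W⟩, ⟨hI, hW⟩, hIW⟩ := nhds_zero_hasBasis.mem_iff.1 (h hU)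
    refine ⟨(hI.image Subtype.val).toFinset, by simp, ?_⟩
    rintro _ hg
    rw [Finite.coe_toFinset] at hg
    obtain ⟨f, hf, rfl⟩ := closure_diff_image_le_map_kalton I hg
    refine hIW fun a ha => ?_
    rw [AddSubgroup.mem_bot.1 (hf a ha)]
    exact mem_of_mem_nhds hW
  · obtain ⟨V, hV, hVU⟩ := exists_nhds_zero_half hU
    obtain ⟨F, -, hFV⟩ := hA V hV
    set T := F.preimage Subtype.val Subtype.val_injective.injOn
    have hsum : (fun f : SA A => ∑ a ∈ T, coords A f a) ⁻¹' V ∈ 𝓝 0 :=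
      (continuous_finsetSum T fun a _ => continuous_coords_apply a).continuousAt
        |>.preimage_mem_nhds (by simpa using hV)
    show kalton A ⁻¹' U ∈ 𝓝 0
    filter_upwards [hsum] with f hf
    rw [mem_preimage, ← sub_add_cancel (kalton A f) (∑ a ∈ T, coords A f a)]
    exact hVU _ (hFV (kalton_sub_sum_mem_closure f F)) _ hf

end Topology

end Kalton

theorem stmt11 {G : Type*} [AddCommGroup G] [TopologicalSpace G] [IsTopologicalAddGroup G]
    [T2Space G] (A : Set G) (h0 : (0 : G) ∉ A) :
    (TopIndep A ∧ AbsCauchySummable A) ↔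
    (Function.Injective (kalton A) ∧ Continuous (kalton A) ∧
      ∀ O : Set ↥(FinSupp A (fun a => AddSubgroup.zmultiples (a : G))), IsOpen O →
        ∃ V : Set G, IsOpen V ∧ kalton A '' O = V ∩ Set.range (kalton A)) := by
  rw [← isEmbedding_iff_forall_isOpen_image_eq_inter_range, Kalton.isEmbedding_kalton_iff]
  constructor
  · rintro ⟨hti, hacs⟩
    have hle := tendsto_iff_comap.1 (Kalton.tendsto_kalton_nhds_zero_iff.2 hacs)
    exact ⟨le_antisymm hle hti.comap_kalton_nhds_zero_le, hti.indep_s11.kalton_injective⟩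
  · rintro ⟨hnhds, -⟩
    have hacs := Kalton.tendsto_kalton_nhds_zero_iff.1 (tendsto_iff_comap.2 hnhds.le)
    exact ⟨Kalton.topIndep_of_comap_kalton_nhds_zero_le h0 hacs hnhds.ge, hacs⟩
end

section
/- Let A be an infinite absolutely Cauchy summable subset of a Hausdorff abelian topological group G such that the cyclic subgroup ⟨a⟩ is discrete for every a ∈ A. Then A contains an infinite topologically independent subset. -/
open Filter Topology

/-!
Choose recursively distinct nonzero `b n ∈ A` and neighbourhoods `U n` of `0` such that
`U (n+1) + U (n+1) ⊆ U n` meets `⟨b n⟩` only in `0` (discreteness of `⟨b n⟩`) and the subgroup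
generated by the tail `{b m | m ≥ n}` lies in `U n` (absolute Cauchy summability). Then a
combination `∑_{i<n} z i • b i` lying in `U n + U n` has all terms zero: its last term lies in
`U n`, so the shorter sum lies in `U (n-1) + U (n-1)`. Given a neighbourhood `W`, absolute
Cauchy summability gives a finite `F` with `⟨A \ F⟩ ⊆ W`; take `U M` with `M` past the indices
of `F`. A combination in `U M` splits into terms of index `≥ M`, which lie in `W` and whose sum
lies in `U M`, and a head which therefore lies in `U M + U M` and vanishes.
-/

section

open Set Pointwise

theorem eventually_nhds_mem_imp_eq_of_discreteTopology {X : Type*} [TopologicalSpace X]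
    {s : Set X} [DiscreteTopology s] {x : X} (hx : x ∈ s) : ∀ᶠ y in 𝓝 x, y ∈ s → y = x := by
  have h := discreteTopology_subtype_iff.1 ‹_› x hx
  rw [inf_principal_eq_bot, mem_nhdsWithin_iff_eventually] at h
  filter_upwards [h] with y hy hys
  by_contra hne
  exact hy hne hys

variable {G : Type*} [AddCommGroup G] [TopologicalSpace G]

theorem AbsCauchySummable.mono {A B : Set G} (hA : AbsCauchySummable A) (hBA : B ⊆ A) :
    AbsCauchySummable B := by
  classical
  intro U hU
  obtain ⟨F, -, hF⟩ := hA U hU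
  refine ⟨F.filter (· ∈ B), fun x hx => (Finset.mem_filter.1 hx).2, subset_trans ?_ hF⟩
  refine SetLike.coe_subset_coe.2 (AddSubgroup.closure_mono fun x hx => ⟨hBA hx.1, fun hxF => ?_⟩)
  exact hx.2 (Finset.mem_filter.2 ⟨hxF, hx.1⟩)

structure IsIsolatingSeq (b : ℕ → G) (U : ℕ → Set G) : Prop where
  injective : Function.Injective b
  ne_zero : ∀ n, b n ≠ 0
  nhds : ∀ n, U n ∈ 𝓝 0
  closure_tail_subset : ∀ m, (AddSubgroup.closure (b '' Ici m) : Set G) ⊆ U m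
  add_self_succ_subset : ∀ n, U (n + 1) + U (n + 1) ⊆ U n
  isolates : ∀ n, ∀ g ∈ AddSubgroup.zmultiples (b n), g ∈ U (n + 1) + U (n + 1) → g = 0

namespace IsIsolatingSeq

variable {b : ℕ → G} {U : ℕ → Set G}

theorem zsmul_mem_of_le (h : IsIsolatingSeq b U) {m n : ℕ} (hmn : m ≤ n) (k : ℤ) :
    k • b n ∈ U m :=
  h.closure_tail_subset m
    (AddSubgroup.zsmul_mem _ (AddSubgroup.subset_closure (mem_image_of_mem b hmn)) k)

theorem zsmul_eq_zero_of_sum_range_mem (h : IsIsolatingSeq b U) (n : ℕ) (z : ℕ → ℤ)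
    (hsum : ∑ i ∈ Finset.range n, z i • b i ∈ U n + U n) : ∀ i < n, z i • b i = 0 := by
  induction n with
  | zero => intro i hi; omega
  | succ n ih =>
    rw [Finset.sum_range_succ] at hsum
    have hprefix : ∑ i ∈ Finset.range n, z i • b i ∈ U n + U n := by
      have := add_mem_add (h.add_self_succ_subset n hsum) (h.zsmul_mem_of_le (le_refl n) (-z n))
      rwa [neg_smul, add_neg_cancel_right] at this
    have hzero := ih hprefix
    have hlast : z n • b n = 0 := by
      rw [Finset.sum_eq_zero fun i hi => hzero i (Finset.mem_range.1 hi), zero_add] at hsum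
      exact h.isolates n _ (AddSubgroup.zsmul_mem_zmultiples _ _) hsum
    intro i hi
    rcases Nat.lt_succ_iff_lt_or_eq.1 hi with hi | rfl
    exacts [hzero i hi, hlast]

theorem zsmul_eq_zero_of_sum_mem (h : IsIsolatingSeq b U) {n : ℕ} {F : Finset G}
    (hF : ↑F ⊆ b '' Iio n) (z : G → ℤ) (hsum : ∑ a ∈ F, z a • a ∈ U n + U n) :
    ∀ a ∈ F, z a • a = 0 := by
  classical
  let z' : ℕ → ℤ := fun i => if b i ∈ F then z (b i) else 0
  have hFn : F ⊆ (Finset.range n).image b := by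
    simpa [← Finset.coe_subset, Finset.coe_image, Finset.coe_range] using hF
  have hsum' : ∑ i ∈ Finset.range n, z' i • b i = ∑ a ∈ F, z a • a := by
    rw [← Finset.inter_eq_right.2 hFn, ← Finset.sum_ite_mem,
      Finset.sum_image (f := fun a => if a ∈ F then z a • a else 0) h.injective.injOn]
    simp [z', ite_smul]
  intro a ha
  obtain ⟨i, hi, rfl⟩ := hF ha
  have := h.zsmul_eq_zero_of_sum_range_mem n z' (hsum' ▸ hsum) i hi
  simpa [z', ha] using this

theorem topIndep_range (h : IsIsolatingSeq b U) (hacs : AbsCauchySummable (range b)) :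
    TopIndep (range b) := by
  classical
  refine ⟨fun ⟨n, hn⟩ => h.ne_zero n hn, fun W hW => ?_⟩
  obtain ⟨FW, -, hFW⟩ := hacs W hW
  obtain ⟨M, hM⟩ : ∃ M, ∀ n ≥ M, b n ∉ FW := eventually_atTop.1 <| Nat.cofinite_eq_atTop ▸
    h.injective.tendsto_cofinite.eventually FW.eventually_cofinite_notMem
  refine ⟨U M, h.nhds M, fun F hF z hsum => ?_⟩
  have tail : ∀ a ∈ F, a ∉ b '' Iio M → ∃ n, M ≤ n ∧ b n = a := by
    intro a ha haM
    obtain ⟨n, rfl⟩ := hF ha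
    exact ⟨n, not_lt.1 fun hn => haM ⟨n, hn, rfl⟩, rfl⟩
  have htail : ∑ a ∈ F.filter (· ∉ b '' Iio M), z a • a ∈ AddSubgroup.closure (b '' Ici M) := by
    refine AddSubgroup.sum_mem _ fun a ha => ?_
    obtain ⟨n, hn, rfl⟩ := tail a (Finset.mem_filter.1 ha).1 (Finset.mem_filter.1 ha).2
    exact AddSubgroup.zsmul_mem _ (AddSubgroup.subset_closure (mem_image_of_mem b hn)) _
  have hhead : ∑ a ∈ F.filter (· ∈ b '' Iio M), z a • a ∈ U M + U M := by
    rw [eq_sub_iff_add_eq.2 (F.sum_filter_add_sum_filter_not (· ∈ b '' Iio M)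
      fun a => z a • a), sub_eq_add_neg]
    exact add_mem_add hsum (h.closure_tail_subset M (neg_mem htail))
  have hzero := h.zsmul_eq_zero_of_sum_mem (fun a ha => (Finset.mem_filter.1 ha).2) z hhead
  intro a ha
  by_cases haM : a ∈ b '' Iio M
  · rw [hzero a (Finset.mem_filter.2 ⟨ha, haM⟩)]
    exact mem_of_mem_nhds hW
  · obtain ⟨n, hn, rfl⟩ := tail a ha haM
    have hbn : b n ∈ range b \ FW := ⟨mem_range_self n, hM n hn⟩
    exact hFW (AddSubgroup.zsmul_mem _ (AddSubgroup.subset_closure hbn) _)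

end IsIsolatingSeq

structure Stage (G : Type*) where
  point : G
  nhd : Set G
  avoid : Finset G

namespace Stage

structure IsAdmissible (A : Set G) (x : Stage G) : Prop where
  point_mem : x.point ∈ A
  point_ne_zero : x.point ≠ 0
  point_notMem_avoid : x.point ∉ x.avoid
  nhd_mem_nhds : x.nhd ∈ 𝓝 0
  closure_subset_nhd : (AddSubgroup.closure (A \ x.avoid) : Set G) ⊆ x.nhd

structure Precedes (x y : Stage G) : Prop where
  point_ne : y.point ≠ x.point
  point_notMem_avoid : y.point ∉ x.avoid
  nhd_add_nhd_subset : y.nhd + y.nhd ⊆ x.nhd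
  isolates : ∀ g ∈ AddSubgroup.zmultiples x.point, g ∈ y.nhd + y.nhd → g = 0

end Stage

variable [IsTopologicalAddGroup G] {A : Set G}

theorem Stage.exists_isAdmissible_precedes (hinf : A.Infinite) (hacs : AbsCauchySummable A)
    (hdisc : ∀ a ∈ A, DiscreteTopology (AddSubgroup.zmultiples a)) (s : Finset (Stage G))
    (hs : ∀ x ∈ s, x.IsAdmissible A) : ∃ y, y.IsAdmissible A ∧ ∀ x ∈ s, x.Precedes y := by
  classical
  have hW : {g | ∀ x ∈ s, g ∈ x.nhd ∧ (g ∈ AddSubgroup.zmultiples x.point → g = 0)} ∈ 𝓝 0 := by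
    refine eventually_all_finset s |>.2 fun x hx => Eventually.and (hs x hx).nhd_mem_nhds ?_
    have := hdisc x.point (hs x hx).point_mem
    exact eventually_nhds_mem_imp_eq_of_discreteTopology
      (s := (AddSubgroup.zmultiples x.point : Set G)) (zero_mem _)
  obtain ⟨U, hUo, hU0, hUW⟩ := exists_open_nhds_zero_add_subset hW
  obtain ⟨F, -, hF⟩ := hacs U (hUo.mem_nhds hU0)
  let E : Finset G := insert 0 (F ∪ s.image Stage.point ∪ s.biUnion Stage.avoid)
  obtain ⟨b, hbA, hbE⟩ := (hinf.sdiff E.finite_toSet).nonempty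
  simp only [E, Finset.coe_insert, Finset.coe_union, Finset.coe_image, Finset.coe_biUnion,
    mem_insert_iff, mem_union, mem_image, mem_iUnion, Finset.mem_coe, not_or, not_exists,
    not_and] at hbE
  refine ⟨⟨b, U, F⟩, ⟨hbA, hbE.1, hbE.2.1.1, hUo.mem_nhds hU0, hF⟩, fun x hx => ?_⟩
  exact ⟨fun h => hbE.2.1.2 x hx h.symm, fun h => hbE.2.2 x hx h,
    fun g hg => (hUW hg x hx).1, fun g hgx hg => (hUW hg x hx).2 hgx⟩

theorem exists_isIsolatingSeq (hinf : A.Infinite) (hacs : AbsCauchySummable A)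
    (hdisc : ∀ a ∈ A, DiscreteTopology (AddSubgroup.zmultiples a)) :
    ∃ (b : ℕ → G) (U : ℕ → Set G), IsIsolatingSeq b U ∧ range b ⊆ A := by
  obtain ⟨x, hadm, hprec⟩ := exists_seq_of_forall_finset_exists _ _
    (Stage.exists_isAdmissible_precedes hinf hacs hdisc)
  have hsucc (n : ℕ) := hprec n (n + 1) n.lt_succ_self
  have htail (m n : ℕ) (hmn : m ≤ n) : (x n).point ∈ A \ (x m).avoid := by
    rcases hmn.eq_or_lt with rfl | hmn
    exacts [⟨(hadm m).point_mem, (hadm m).point_notMem_avoid⟩,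
      ⟨(hadm n).point_mem, (hprec m n hmn).point_notMem_avoid⟩]
  refine ⟨fun n => (x n).point, fun n => (x n).nhd, ⟨?_, fun n => (hadm n).point_ne_zero,
    fun n => (hadm n).nhd_mem_nhds, fun m => ?_, fun n => (hsucc n).nhd_add_nhd_subset,
    fun n => (hsucc n).isolates⟩, ?_⟩
  · exact Function.Injective.of_lt_imp_ne fun m n hmn => (hprec m n hmn).point_ne.symm
  · refine subset_trans (SetLike.coe_subset_coe.2 (AddSubgroup.closure_mono ?_))
      (hadm m).closure_subset_nhd
    rintro _ ⟨n, hmn, rfl⟩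
    exact htail m n hmn
  · rintro _ ⟨n, rfl⟩
    exact (hadm n).point_mem

end

theorem stmt12_general {G : Type*} [AddCommGroup G] [TopologicalSpace G] [IsTopologicalAddGroup G]
    (A : Set G) (hinf : A.Infinite) (hacs : AbsCauchySummable A)
    (hdisc : ∀ a ∈ A, DiscreteTopology (AddSubgroup.zmultiples a)) :
    ∃ B ⊆ A, B.Infinite ∧ TopIndep B := by
  obtain ⟨b, U, hbU, hbA⟩ := exists_isIsolatingSeq hinf hacs hdisc
  exact ⟨Set.range b, hbA, Set.infinite_range_of_injective hbU.injective,
    hbU.topIndep_range (hacs.mono hbA)⟩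

theorem stmt12 {G : Type*} [AddCommGroup G] [TopologicalSpace G] [IsTopologicalAddGroup G]
    [T2Space G] (A : Set G) (hinf : A.Infinite) (hacs : AbsCauchySummable A)
    (hdisc : ∀ a ∈ A, DiscreteTopology (AddSubgroup.zmultiples a)) :
    ∃ B ⊆ A, B.Infinite ∧ TopIndep B :=
  stmt12_general A hinf hacs hdisc
end

section
/- Every absolutely summable subset of a Hausdorff abelian topological group is absolutely Cauchy summable, and in a complete group the converse holds: every absolutely Cauchy summable subset is absolutely summable. -/
/-!
If `A` is not absolutely Cauchy summable, witnessed by a neighbourhood `U` of `0`, then for every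
finite `F` some integer combination of elements of `A \ F` lies outside `U`. Choosing these
combinations recursively, each avoiding the supports of the previous ones, gives infinitely many
combinations with pairwise disjoint supports; glued into a single integer family on `A`, their
partial sums violate the Cauchy criterion, so that family is not summable. Conversely, absolute
Cauchy summability is exactly the Cauchy criterion for every integer family, which suffices in a
complete group.
-/

open Filter Topology

section AbsSummable
open Function

variable {G : Type*} [AddCommGroup G]

theorem absCauchySummable_iff [TopologicalSpace G] {A : Set G} :
    AbsCauchySummable A ↔
      ∀ U ∈ 𝓝 (0 : G), ∃ F : Set G, F.Finite ∧ (AddSubgroup.closure (A \ F) : Set G) ⊆ U := by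
  refine ⟨fun h U hU => ?_, fun h U hU => ?_⟩
  · obtain ⟨F, -, hFU⟩ := h U hU
    exact ⟨F, F.finite_toSet, hFU⟩
  · obtain ⟨F, hF, hFU⟩ := h U hU
    refine ⟨(hF.inter_of_left A).toFinset, by simp, ?_⟩
    rwa [Set.Finite.coe_toFinset, Set.sdiff_inter_self_eq_sdiff]

theorem AddSubgroup.mem_closure_iff_exists_finsupp {S : Set G} {g : G} :
    g ∈ AddSubgroup.closure S ↔
      ∃ c : G →₀ ℤ, ↑c.support ⊆ S ∧ (c.sum fun x k => k • x) = g := by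
  rw [← Submodule.span_int_eq_addSubgroupClosure, Submodule.mem_toAddSubgroup,
    Submodule.mem_span_set]

theorem exists_disjoint_of_pairwise_disjoint {α : Type*} {t : ℕ → Finset α}
    (ht : Pairwise (Disjoint on t)) (s : Finset α) : ∃ n, Disjoint (t n) s := by
  by_contra! hmeet
  choose f hf using fun n => Finset.not_disjoint_iff.mp (hmeet n)
  obtain ⟨m, n, hmn, hfmn⟩ :=
    Finite.exists_ne_map_eq_of_infinite fun n => (⟨f n, (hf n).2⟩ : s)
  have hfmn' : f m = f n := congrArg Subtype.val hfmn
  exact Finset.disjoint_left.mp (ht hmn) (hf m).1 (hfmn' ▸ (hf n).1)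

theorem exists_seq_finsupp_sum_notMem {A U : Set G}
    (h : ∀ F : Set G, F.Finite → ¬(AddSubgroup.closure (A \ F) : Set G) ⊆ U) :
    ∃ c : ℕ → G →₀ ℤ, (∀ n, ↑(c n).support ⊆ A) ∧
      Pairwise (Disjoint on fun n => (c n).support) ∧
      ∀ n, ((c n).sum fun x k => k • x) ∉ U := by
  obtain ⟨c, hc⟩ := Set.seq_of_forall_finite_exists
    (P := fun (c : G →₀ ℤ) (S : Set (G →₀ ℤ)) =>
      ↑c.support ⊆ A \ ⋃ d ∈ S, ↑d.support ∧ (c.sum fun x k => k • x) ∉ U)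
    fun S hS => by
      obtain ⟨g, hg, hgU⟩ :=
        Set.not_subset.mp (h _ (hS.biUnion fun d _ => d.support.finite_toSet))
      obtain ⟨c, hcA, rfl⟩ := AddSubgroup.mem_closure_iff_exists_finsupp.mp hg
      exact ⟨c, hcA, hgU⟩
  refine ⟨c, fun n => (hc n).1.trans Set.sdiff_subset, ?_, fun n => (hc n).2⟩
  refine (pairwise_disjoint_on _).mpr fun m n hmn => Finset.disjoint_left.mpr fun x hxm hxn => ?_
  exact ((hc n).1 hxn).2 (Set.mem_biUnion (Set.mem_image_of_mem c hmn) hxm)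

theorem tsum_eq_of_mem_support {α : Type*} {c : ℕ → α →₀ ℤ}
    (hc : Pairwise (Disjoint on fun n => (c n).support)) {n : ℕ} {x : α}
    (hx : x ∈ (c n).support) : ∑' m, c m x = c n x :=
  tsum_eq_single n fun _ hmn =>
    Finsupp.notMem_support_iff.mp (Finset.disjoint_right.mp (hc hmn) hx)

theorem AbsSummable.absCauchySummable [TopologicalSpace G] [IsTopologicalAddGroup G]
    {A : Set G} (hA : AbsSummable A) : AbsCauchySummable A := by
  refine absCauchySummable_iff.mpr fun U hU => ?_
  by_contra! h
  obtain ⟨c, hcA, hdisj, hcU⟩ := exists_seq_finsupp_sum_notMem h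
  -- one integer family on `A` that agrees with every `c n` on its support
  obtain ⟨g, hg⟩ := hA fun a => ∑' n, c n a
  obtain ⟨s, hs⟩ := ((summable_subtype_iff_indicator
    (f := fun x : G => (∑' n, c n x) • x)).mp hg.summable).vanishing hU
  obtain ⟨n, hn⟩ := exists_disjoint_of_pairwise_disjoint hdisj s
  refine hcU n ?_
  convert hs _ hn using 1
  refine Finset.sum_congr rfl fun x hx => ?_
  rw [Set.indicator_of_mem (hcA n hx), tsum_eq_of_mem_support hdisj hx]

theorem AbsCauchySummable.absSummable [UniformSpace G] [IsUniformAddGroup G] [CompleteSpace G]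
    {A : Set G} (hA : AbsCauchySummable A) : AbsSummable A := by
  intro z
  refine summable_iff_vanishing.mpr fun U hU => ?_
  obtain ⟨F, -, hFU⟩ := hA U hU
  refine ⟨F.preimage Subtype.val Subtype.val_injective.injOn, fun t ht => hFU ?_⟩
  refine AddSubgroup.sum_mem _ fun a ha => AddSubgroup.zsmul_mem _ (AddSubgroup.subset_closure ?_) _
  exact ⟨a.2, fun haF => Finset.disjoint_left.mp ht ha (Finset.mem_preimage.mpr haF)⟩

end AbsSummable

theorem stmt13_general {G : Type*} [AddCommGroup G] [UniformSpace G] [IsUniformAddGroup G]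
    (A : Set G) :
    (AbsSummable A → AbsCauchySummable A) ∧
    (CompleteSpace G → AbsCauchySummable A → AbsSummable A) :=
  ⟨AbsSummable.absCauchySummable, fun _ => AbsCauchySummable.absSummable⟩

theorem stmt13 {G : Type*} [AddCommGroup G] [UniformSpace G] [IsUniformAddGroup G]
    [T2Space G] (A : Set G) :
    (AbsSummable A → AbsCauchySummable A) ∧
    (CompleteSpace G → AbsCauchySummable A → AbsSummable A) :=
  stmt13_general A
end

section
/- For a subset A of a Hausdorff abelian topological group G, the following are equivalent: (i) for every neighbourhood U of 0 and every family {z_a : a ∈ A} of integers there is a finite F ⊆ A such that ∑_{a∈E} z_a·a ∈ U for every finite E ⊆ A \ F; (ii) A is absolutely Cauchy summable, i.e., for every neighbourhood U of 0 there is a finite F ⊆ A such that the subgroup generated by A \ F is contained in U. -/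
open Filter Topology

/-! The equivalence holds for each set `U` separately. If no tail subgroup `⟨A \ F⟩` fits
into `U`, every cofinite part of `A` carries a finite integer combination escaping `U`. Choosing
such combinations recursively with pairwise disjoint supports and gluing their coefficients gives
a single family `z` whose finite sums escape `U` beyond every finite `F`. -/

section DisjointFamilies
open Function
variable {α ι : Type*}

theorem exists_pairwise_disjoint_seq [DecidableEq α] {p : Finset α → Prop}
    (h : ∀ S : Finset α, ∃ E, Disjoint E S ∧ p E) :
    ∃ E : ℕ → Finset α, Pairwise (Disjoint on E) ∧ ∀ n, p (E n) := by
  choose next hnext_disj hnext using h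
  let S : ℕ → Finset α := fun n => Nat.rec ∅ (fun _ S => S ∪ next S) n
  have hS : Monotone S := monotone_nat_of_le_succ fun _ => Finset.subset_union_left
  refine ⟨fun n => next (S n), pairwise_disjoint_on _ |>.2 fun m n hmn => ?_, fun n => hnext _⟩
  have hmn' : next (S m) ⊆ S n := Finset.subset_union_right.trans (hS hmn)
  exact (hnext_disj (S n)).symm.mono_left hmn'

theorem Pairwise.exists_disjoint_finset [Infinite ι] {E : ι → Finset α}
    (hE : Pairwise (Disjoint on E)) (F : Finset α) : ∃ i, Disjoint (E i) F := by
  by_contra! hmeet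
  simp only [Finset.not_disjoint_iff] at hmeet
  choose f hfE hfF using hmeet
  have hinj : Injective fun i => (⟨f i, hfF i⟩ : F) := by
    intro i j hij
    by_contra hne
    have hfij : f i = f j := congrArg Subtype.val hij
    exact Finset.disjoint_left.1 (hE hne) (hfE i) (hfij ▸ hfE j)
  have := Finite.of_injective _ hinj
  exact not_finite ι

theorem Pairwise.exists_eq_on_disjoint [Nonempty ι] {β : Type*} {E : ι → Finset α}
    (hE : Pairwise (Disjoint on E)) (z : ι → α → β) :
    ∃ w : α → β, ∀ i, ∀ a ∈ E i, w a = z i a := by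
  refine ⟨fun a => z (Classical.epsilon fun i => a ∈ E i) a, fun i a ha => ?_⟩
  have hmem : a ∈ E (Classical.epsilon fun i => a ∈ E i) :=
    Classical.epsilon_spec (p := fun j => a ∈ E j) ⟨i, ha⟩
  have heq : (Classical.epsilon fun i => a ∈ E i) = i := by
    by_contra hne
    exact Finset.disjoint_left.1 (hE hne) hmem ha
  simp only [heq]

end DisjointFamilies

theorem Set.exists_finset_subset_diff_eq {α : Type*} (A : Set α) (S : Finset α) :
    ∃ F : Finset α, ↑F ⊆ A ∧ A \ ↑F = A \ ↑S := by
  classical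
  refine ⟨S.filter (· ∈ A), fun a ha => (Finset.mem_filter.1 ha).2, ?_⟩
  ext a
  simp only [Set.mem_sdiff, Finset.coe_filter, Set.mem_ofPred_eq, Finset.mem_coe]
  tauto

section Tails
variable {G : Type*} [AddCommGroup G]

theorem AddSubgroup.mem_closure_iff_exists_finset_sum_zsmul {s : Set G} {x : G} :
    x ∈ AddSubgroup.closure s ↔
      ∃ (E : Finset G) (z : G → ℤ), ↑E ⊆ s ∧ ∑ a ∈ E, z a • a = x := by
  refine ⟨fun hx => ?_, fun ⟨E, z, hE, hx⟩ => hx ▸ AddSubgroup.sum_mem _ fun a ha =>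
    AddSubgroup.zsmul_mem _ (AddSubgroup.subset_closure (hE ha)) _⟩
  rw [← Submodule.span_int_eq_addSubgroupClosure, Submodule.mem_toAddSubgroup,
    Submodule.mem_span_iff_exists_finset_subset] at hx
  obtain ⟨z, E, hE, -, rfl⟩ := hx
  exact ⟨E, z, hE, rfl⟩

theorem exists_closure_diff_subset_of_forall_sum_zsmul_mem {A U : Set G}
    (h : ∀ z : G → ℤ, ∃ F : Finset G,
      ∀ E : Finset G, ↑E ⊆ A \ ↑F → ∑ a ∈ E, z a • a ∈ U) :
    ∃ F : Finset G, ↑F ⊆ A ∧ (AddSubgroup.closure (A \ ↑F) : Set G) ⊆ U := by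
  classical
  by_contra! hlarge
  have hescape : ∀ S : Finset G, ∃ E : Finset G, Disjoint E S ∧
      ↑E ⊆ A ∧ ∃ z : G → ℤ, ∑ a ∈ E, z a • a ∉ U := by
    intro S
    obtain ⟨F, hFA, hFS⟩ := Set.exists_finset_subset_diff_eq A S
    obtain ⟨x, hx, hxU⟩ := Set.not_subset.1 (hlarge F hFA)
    rw [SetLike.mem_coe, hFS, AddSubgroup.mem_closure_iff_exists_finset_sum_zsmul] at hx
    obtain ⟨E, z, hE, rfl⟩ := hx
    obtain ⟨hEA, hES⟩ := Set.subset_sdiff.1 hE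
    exact ⟨E, Finset.disjoint_coe.1 hES, hEA, z, hxU⟩
  obtain ⟨E, hdisj, hE⟩ := exists_pairwise_disjoint_seq hescape
  choose hEA z hz using hE
  obtain ⟨w, hw⟩ := hdisj.exists_eq_on_disjoint z
  obtain ⟨F, hF⟩ := h w
  obtain ⟨n, hn⟩ := hdisj.exists_disjoint_finset F
  refine hz n ?_
  rw [← Finset.sum_congr rfl fun a ha => congrArg (· • a) (hw n a ha)]
  exact hF (E n) (Set.subset_sdiff.2 ⟨hEA n, Finset.disjoint_coe.2 hn⟩)

theorem forall_exists_sum_zsmul_mem_iff_exists_closure_diff_subset {A U : Set G} :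
    (∀ z : G → ℤ, ∃ F : Finset G, ↑F ⊆ A ∧
      ∀ E : Finset G, ↑E ⊆ A \ ↑F → ∑ a ∈ E, z a • a ∈ U) ↔
    ∃ F : Finset G, ↑F ⊆ A ∧ (AddSubgroup.closure (A \ ↑F) : Set G) ⊆ U :=
  ⟨fun h => exists_closure_diff_subset_of_forall_sum_zsmul_mem fun z =>
      (h z).imp fun _ => And.right,
    fun ⟨F, hFA, hFU⟩ z => ⟨F, hFA, fun E hE =>
      hFU (AddSubgroup.mem_closure_iff_exists_finset_sum_zsmul.2 ⟨E, z, hE, rfl⟩)⟩⟩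

end Tails

theorem stmt14_general {G : Type*} [AddCommGroup G] [TopologicalSpace G] (A : Set G) :
    (∀ U ∈ 𝓝 (0 : G), ∀ z : G → ℤ, ∃ F : Finset G, ↑F ⊆ A ∧
      ∀ E : Finset G, ↑E ⊆ A \ ↑F → (∑ a ∈ E, z a • a) ∈ U)
    ↔ AbsCauchySummable A :=
  forall₂_congr fun _ _ => forall_exists_sum_zsmul_mem_iff_exists_closure_diff_subset

theorem stmt14 {G : Type*} [AddCommGroup G] [TopologicalSpace G] [IsTopologicalAddGroup G]
    [T2Space G] (A : Set G) :
    (∀ U ∈ 𝓝 (0 : G), ∀ z : G → ℤ, ∃ F : Finset G, ↑F ⊆ A ∧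
      ∀ E : Finset G, ↑E ⊆ A \ ↑F → (∑ a ∈ E, z a • a) ∈ U)
    ↔ AbsCauchySummable A :=
  stmt14_general A
end

section
/- Let A be an absolutely Cauchy summable subset of a Hausdorff topological vector space E. Then for every neighbourhood V of 0 in E there exists a finite set F ⊆ A such that the linear span of A \ F (over ℝ) is contained in V. -/
open Filter Topology

theorem tendsto_intFloor_mul_div_natCast (r : ℝ) :
    Tendsto (fun n : ℕ => (⌊(n : ℝ) * r⌋ : ℝ) / n) atTop (𝓝 r) := by
  have hfract : Tendsto (fun n : ℕ => Int.fract ((n : ℝ) * r) / n) atTop (𝓝 0) :=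
    tendsto_bdd_div_atTop_nhds_zero (b := 0) (B := 1)
      (Eventually.of_forall fun _ => Int.fract_nonneg _)
      (Eventually.of_forall fun _ => (Int.fract_lt_one _).le) tendsto_natCast_atTop_atTop
  have hlim : Tendsto (fun n : ℕ => r - Int.fract ((n : ℝ) * r) / n) atTop (𝓝 r) := by
    simpa using tendsto_const_nhds.sub hfract
  refine hlim.congr' ?_
  filter_upwards [eventually_ne_atTop 0] with n hn
  rw [Int.fract, sub_div, mul_div_cancel_left₀ _ (Nat.cast_ne_zero.mpr hn)]
  ring

/- A real combination `∑ c a • a` is the limit of `n⁻¹ • ∑ ⌊n c a⌋ • a`, and the latter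
lie in `U` because `U` is balanced and contains the integer combinations. -/
theorem span_subset_of_addSubgroupClosure_subset {E : Type*} [AddCommGroup E] [Module ℝ E]
    [TopologicalSpace E] [ContinuousAdd E] [ContinuousSMul ℝ E] {S U : Set E}
    (hUc : IsClosed U) (hUb : Balanced ℝ U) (hSU : (AddSubgroup.closure S : Set E) ⊆ U) :
    (Submodule.span ℝ S : Set E) ⊆ U := by
  intro x hx
  obtain ⟨c, hcS, rfl⟩ := Submodule.mem_span_set.mp hx
  set g : ℕ → E := fun n => ∑ a ∈ c.support, ⌊(n : ℝ) * c a⌋ • a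
  have hgU (n : ℕ) : g n ∈ U :=
    hSU (sum_mem fun a ha => zsmul_mem (AddSubgroup.subset_closure (hcS ha)) _)
  have hg_eq (n : ℕ) :
      (n : ℝ)⁻¹ • g n = ∑ a ∈ c.support, ((⌊(n : ℝ) * c a⌋ : ℝ) / n) • a := by
    simp only [g, Finset.smul_sum, ← Int.cast_smul_eq_zsmul ℝ, smul_smul, div_eq_inv_mul]
  have hlim : Tendsto (fun n : ℕ => (n : ℝ)⁻¹ • g n) atTop (𝓝 (c.sum fun a r => r • a)) := by
    simp only [hg_eq, Finsupp.sum]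
    exact tendsto_finsetSum _ fun a _ => (tendsto_intFloor_mul_div_natCast (c a)).smul_const a
  refine hUc.mem_of_tendsto hlim (eventually_atTop.2 ⟨1, fun n hn => hUb.smul_mem ?_ (hgU n)⟩)
  rw [norm_inv, Real.norm_natCast]
  exact inv_le_one_of_one_le₀ (by exact_mod_cast hn)

theorem stmt16_general {E : Type*} [AddCommGroup E] [Module ℝ E] [TopologicalSpace E]
    [IsTopologicalAddGroup E] [ContinuousSMul ℝ E]
    (A : Set E) (hA : AbsCauchySummable A) :
    ∀ V ∈ 𝓝 (0 : E), ∃ F : Finset E, ↑F ⊆ A ∧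
      (Submodule.span ℝ (A \ ↑F) : Set E) ⊆ V := by
  intro V hV
  obtain ⟨U, ⟨hU0, hUc, hUb⟩, hUV⟩ := (nhds_basis_closed_balanced ℝ E).mem_iff.mp hV
  obtain ⟨F, hFA, hFU⟩ := hA U hU0
  exact ⟨F, hFA, (span_subset_of_addSubgroupClosure_subset hUc hUb hFU).trans hUV⟩

theorem stmt16 {E : Type*} [AddCommGroup E] [Module ℝ E] [TopologicalSpace E]
    [IsTopologicalAddGroup E] [ContinuousSMul ℝ E] [T2Space E]
    (A : Set E) (hA : AbsCauchySummable A) :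
    ∀ V ∈ 𝓝 (0 : E), ∃ F : Finset E, ↑F ⊆ A ∧
      (Submodule.span ℝ (A \ ↑F) : Set E) ⊆ V :=
  stmt16_general A hA
end

section
/- If A is an absolutely Cauchy summable subset of a Hausdorff topological vector space E, then the linear subspace of E spanned by A is locally convex in its subspace topology. -/
open Filter Topology

/-!
Given a neighbourhood `U` of `0`, choose a closed balanced `W ⊆ U` and a finite `F` with
`⟨A \ F⟩ ⊆ W`. Then even the real span of `A \ F` lies in `W`: a real combination of `A \ F` is
the limit of the rational combinations `n⁻¹ • ∑ ⌊n c_a⌋ • a`, which lie in `W` since `W` is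
balanced. So every neighbourhood of `0` in `span A` contains a subspace of finite codimension, and
a real topological vector space with this property is locally convex: modulo the closure of such a
subspace it is finite-dimensional and Hausdorff, hence locally convex, and the quotient map is
open.
-/

theorem tendsto_int_floor_mul_div_atTop {R : Type*} [TopologicalSpace R] [Field R] [LinearOrder R]
    [IsStrictOrderedRing R] [OrderTopology R] [FloorRing R] (a : R) :
    Tendsto (fun x ↦ (⌊a * x⌋ : R) / x) atTop (𝓝 a) := by
  have hlow : Tendsto (fun x : R ↦ a - x⁻¹) atTop (𝓝 a) := by
    simpa using tendsto_const_nhds.sub (tendsto_inv_atTop_zero (𝕜 := R))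
  refine tendsto_of_tendsto_of_tendsto_of_le_of_le' hlow tendsto_const_nhds ?_ ?_ <;>
    filter_upwards [eventually_gt_atTop 0] with x hx
  · rw [le_div_iff₀ hx, sub_mul, inv_mul_cancel₀ hx.ne']
    linarith [Int.lt_floor_add_one (a * x)]
  · rw [div_le_iff₀ hx]
    exact Int.floor_le _

theorem Submodule.finite_quotient_of_diff_subset {R M : Type*} [Ring R] [AddCommGroup M]
    [Module R M] {s t : Set M} (hs : span R s = ⊤) (ht : t.Finite) {N : Submodule R M}
    (hN : s \ t ⊆ N) : Module.Finite R (M ⧸ N) := by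
  have hspan : span R (N.mkQ '' t) = ⊤ := by
    rw [eq_top_iff, ← N.range_mkQ, LinearMap.range_eq_map, ← hs, map_span, span_le]
    rintro _ ⟨x, hx, rfl⟩
    by_cases hxt : x ∈ t
    · exact subset_span ⟨x, hxt, rfl⟩
    · rw [N.mkQ_apply, (Quotient.mk_eq_zero N).mpr (hN ⟨hx, hxt⟩)]
      exact zero_mem _
  rw [Module.finite_def, ← hspan]
  exact fg_span (ht.image _)

section RealTVS

variable {E : Type*} [AddCommGroup E] [Module ℝ E] [TopologicalSpace E]
  [IsTopologicalAddGroup E] [ContinuousSMul ℝ E]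

theorem locallyConvexSpace_of_finiteDimensional [T2Space E] [FiniteDimensional ℝ E] :
    LocallyConvexSpace ℝ E := by
  let e : E ≃L[ℝ] (Fin (Module.finrank ℝ E) → ℝ) :=
    ContinuousLinearEquiv.ofFinrankEq (Module.finrank_fin_fun ℝ).symm
  have h : ‹TopologicalSpace E› = .induced e inferInstance := e.toHomeomorph.isInducing.eq_induced
  exact h ▸ LocallyConvexSpace.induced (e : E →ₗ[ℝ] (Fin (Module.finrank ℝ E) → ℝ))

theorem locallyConvexSpace_of_forall_nhds_zero_finite_quotient
    (h : ∀ U ∈ 𝓝 (0 : E), ∃ L : Submodule ℝ E, Module.Finite ℝ (E ⧸ L) ∧ (L : Set E) ⊆ U) :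
    LocallyConvexSpace ℝ E := by
  rw [locallyConvexSpace_iff_exists_convex_subset_zero]
  intro U hU
  obtain ⟨S, hS, hSU⟩ := exists_nhds_zero_half hU
  obtain ⟨V, ⟨hV, hVc⟩, hVS⟩ := (closed_nhds_basis (0 : E)).mem_iff.mp hS
  obtain ⟨L, hLfin, hLV⟩ := h V hV
  set K := L.topologicalClosure
  have hKS : (K : Set E) ⊆ S := (closure_minimal hLV hVc).trans hVS
  have : IsClosed (K : Set E) := L.isClosed_topologicalClosure
  have : Module.Finite ℝ (E ⧸ K) :=
    Module.Finite.of_surjective _ (Submodule.factor_surjective L.le_topologicalClosure)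
  have := locallyConvexSpace_of_finiteDimensional (E := E ⧸ K)
  have hπS : K.mkQ '' S ∈ 𝓝 0 := by
    simpa using K.isOpenQuotientMap_mkQ.isOpenMap.image_mem_nhds hS
  obtain ⟨D, hD, hDc, hDS⟩ :=
    (locallyConvexSpace_iff_exists_convex_subset_zero ℝ (E ⧸ K)).mp ‹_› _ hπS
  refine ⟨K.mkQ ⁻¹' D, ?_, hDc.linear_preimage K.mkQ, fun x hx => ?_⟩
  · exact K.isOpenQuotientMap_mkQ.continuous.continuousAt.preimage_mem_nhds (by simpa using hD)
  obtain ⟨s, hs, hsx⟩ := hDS hx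
  have hxs : x - s ∈ K := (Submodule.Quotient.eq K).mp hsx.symm
  simpa using hSU s hs (x - s) (hKS hxs)

theorem span_subset_closure_of_balanced {A W : Set E} (hW : Balanced ℝ W)
    (hAW : (AddSubgroup.closure A : Set E) ⊆ W) : (Submodule.span ℝ A : Set E) ⊆ closure W := by
  intro y hy
  obtain ⟨c, s, hsA, -, rfl⟩ := Submodule.mem_span_iff_exists_finset_subset.mp hy
  have hlim : Tendsto (fun n : ℕ => ∑ a ∈ s, ((⌊c a * n⌋ : ℝ) / n) • a) atTop
      (𝓝 (∑ a ∈ s, c a • a)) :=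
    tendsto_finsetSum _ fun a _ =>
      ((tendsto_int_floor_mul_div_atTop (c a)).comp tendsto_natCast_atTop_atTop).smul_const a
  refine mem_closure_of_tendsto hlim ((eventually_ge_atTop 1).mono fun n hn => ?_)
  have hsum : ∑ a ∈ s, ((⌊c a * n⌋ : ℝ) / n) • a = (n : ℝ)⁻¹ • ∑ a ∈ s, ⌊c a * n⌋ • a := by
    simp only [Finset.smul_sum, div_eq_inv_mul, mul_smul, Int.cast_smul_eq_zsmul]
  rw [hsum]
  refine hW.smul_mem ?_ (hAW (AddSubgroup.sum_mem _ fun a ha =>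
    AddSubgroup.zsmul_mem _ (AddSubgroup.subset_closure (hsA ha)) _))
  rw [norm_inv, Real.norm_natCast]
  exact inv_le_one_of_one_le₀ (by exact_mod_cast hn)

theorem AbsCauchySummable.exists_finset_span_diff_subset {A U : Set E} (hA : AbsCauchySummable A)
    (hU : U ∈ 𝓝 0) : ∃ F : Finset E, (Submodule.span ℝ (A \ F) : Set E) ⊆ U := by
  obtain ⟨W, ⟨hW, hWc, hWb⟩, hWU⟩ := (nhds_basis_closed_balanced ℝ E).mem_iff.mp hU
  obtain ⟨F, -, hFW⟩ := hA W hW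
  exact ⟨F, (span_subset_closure_of_balanced hWb hFW).trans (by rwa [hWc.closure_eq])⟩

end RealTVS

theorem stmt17_general {E : Type*} [AddCommGroup E] [Module ℝ E] [TopologicalSpace E]
    [IsTopologicalAddGroup E] [ContinuousSMul ℝ E]
    (A : Set E) (hA : AbsCauchySummable A) :
    LocallyConvexSpace ℝ ↥(Submodule.span ℝ A) := by
  refine locallyConvexSpace_of_forall_nhds_zero_finite_quotient fun U hU => ?_
  obtain ⟨U', hU', hU'U⟩ := (mem_nhds_subtype _ _ _).mp hU
  obtain ⟨F, hF⟩ := hA.exists_finset_span_diff_subset hU'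
  refine ⟨(Submodule.span ℝ (A \ F)).comap (Submodule.span ℝ A).subtype, ?_,
    fun x hx => hU'U (hF hx)⟩
  exact Submodule.finite_quotient_of_diff_subset Submodule.span_span_coe_preimage
    (F.finite_toSet.preimage Subtype.val_injective.injOn) fun x hx => Submodule.subset_span hx

theorem stmt17 {E : Type*} [AddCommGroup E] [Module ℝ E] [TopologicalSpace E]
    [IsTopologicalAddGroup E] [ContinuousSMul ℝ E] [T2Space E]
    (A : Set E) (hA : AbsCauchySummable A) :
    LocallyConvexSpace ℝ ↥(Submodule.span ℝ A) :=
  stmt17_general A hA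
end
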